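/- arXiv:1903.11566 — 9 statements merged into one kernel-verified Lean document; each statement's English description precedes it below -/
import Mathlib

section
/- Let R be a commutative unital ring, n ≥ 1, and A an n×n matrix over R. Define the cofactor-sum cof(A) := Σ_{i,j=1}^n (−1)^{i+j} det(A_{i,j}), where A_{i,j} is the submatrix of A obtained by deleting row i and column j. Then cof(A) = eᵀ·adj(A)·e, and for every x ∈ R one has det(A + x·J) = det(A) + x·cof(A), where J is the n×n all-ones matrix and e the all-ones column vector. -/
/-- The cofactor-sum of a square matrix: the sum over all `i, j` of
`(-1)^(i+j)` times the determinant of the submatrix obtained by deleting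
row `i` and column `j`. (For the empty matrix we set it to `0`.) -/
def cofSum {R : Type*} [CommRing R] : ∀ {n : ℕ}, Matrix (Fin n) (Fin n) R → R
  | 0, _ => 0
  | m + 1, A => ∑ i : Fin (m + 1), ∑ j : Fin (m + 1),
      (-1 : R) ^ ((i : ℕ) + (j : ℕ)) * (A.submatrix i.succAbove j.succAbove).det

/-- `cofSum` equals the total sum of the entries of the adjugate. -/
lemma cofSum_eq_sum_adjugate {R : Type*} [CommRing R] {m : ℕ}
    (A : Matrix (Fin (m + 1)) (Fin (m + 1)) R) :
    cofSum A = ∑ i : Fin (m + 1), ∑ j : Fin (m + 1), Matrix.adjugate A i j := by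
  show (∑ i : Fin (m + 1), ∑ j : Fin (m + 1),
      (-1 : R) ^ ((i : ℕ) + (j : ℕ)) * (A.submatrix i.succAbove j.succAbove).det) = _
  rw [Finset.sum_comm]
  refine Finset.sum_congr rfl fun j _ => Finset.sum_congr rfl fun i _ => ?_
  rw [Matrix.adjugate_fin_succ_eq_det_submatrix]

/-- Determinant of a matrix with one row replaced by the all-ones vector. -/
lemma det_updateRow_ones {R : Type*} [CommRing R] {n : ℕ}
    (A : Matrix (Fin n) (Fin n) R) (i : Fin n) :
    (A.updateRow i (fun _ => (1 : R))).det = ∑ k, Matrix.adjugate A k i := by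
  have h : (fun _ => (1 : R)) = ∑ k : Fin n, Pi.single k (1 : R) := by
    ext j; simp [Finset.univ_sum_single (fun _ => (1 : R))]
  rw [h]
  have key := (Matrix.detRowAlternating :
      AlternatingMap R (Fin n → R) R (Fin n)).toMultilinearMap.map_update_sum
    Finset.univ i (fun k => Pi.single k (1 : R)) A
  show (Matrix.detRowAlternating : AlternatingMap R (Fin n → R) R (Fin n))
      (Function.update A i (∑ k : Fin n, Pi.single k (1 : R))) = _
  refine key.trans (Finset.sum_congr rfl fun k _ => ?_)
  rw [Matrix.adjugate_apply]
  rfl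

/-- For any `n ≥ 1` and any `n × n` matrix `A` over a commutative unital ring `R`,
the cofactor-sum satisfies `cof(A) = eᵀ ⬝ adj(A) ⬝ e` (with `e` the all-ones vector),
and for every `x ∈ R` one has `det(A + x • J) = det A + x * cof(A)`, where `J` is the
all-ones matrix. -/
theorem stmt_0 {R : Type*} [CommRing R] {n : ℕ} (hn : 1 ≤ n)
    (A : Matrix (Fin n) (Fin n) R) :
    cofSum A =
      dotProduct (fun _ => (1 : R)) ((Matrix.adjugate A).mulVec (fun _ => (1 : R)))
    ∧ ∀ x : R,
        (A + x • (Matrix.of fun _ _ => (1 : R))).det = A.det + x * cofSum A := by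
  obtain ⟨m, rfl⟩ : ∃ m, n = m + 1 := ⟨n - 1, (Nat.succ_pred_eq_of_pos hn).symm⟩
  have hcof : cofSum A = ∑ i, ∑ j, Matrix.adjugate A i j := cofSum_eq_sum_adjugate A
  constructor
  · rw [hcof]
    simp [dotProduct, Matrix.mulVec]
  · intro x
    -- determinant as alternating map in the rows
    set f := (Matrix.detRowAlternating : AlternatingMap R (Fin (m+1) → R) R (Fin (m+1))) with hf
    set B : Matrix (Fin (m+1)) (Fin (m+1)) R := fun _ _ => x with hB
    have key : (A + x • (Matrix.of fun _ _ => (1 : R))).det =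
        ∑ s : Finset (Fin (m+1)), f (s.piecewise A B) := by
      have h1 : (A + x • (Matrix.of fun _ _ => (1 : R))) = A + B := by
        ext i j; simp [hB]; rfl
      rw [h1]
      exact f.toMultilinearMap.map_add_univ A B
    -- the good sets: univ and its one-point deletions
    classical
    set Good : Finset (Finset (Fin (m+1))) :=
      insert Finset.univ (Finset.image (fun i => Finset.univ.erase i) Finset.univ) with hGood
    have hzero : ∀ s ∈ Finset.univ, s ∉ Good → f (s.piecewise A B) = 0 := by
      intro s _ hs
      simp only [hGood, Finset.mem_insert, Finset.mem_image, not_or, not_exists] at hs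
      obtain ⟨hs1, hs2⟩ := hs
      -- sᶜ has at least two elements
      have h2 : 1 < sᶜ.card := by
        by_contra h
        push_neg at h
        interval_cases hc : sᶜ.card
        · exact hs1 (by simpa [Finset.card_eq_zero, Finset.compl_eq_empty_iff] using hc)
        · obtain ⟨i, hi⟩ := Finset.card_eq_one.mp hc
          refine hs2 i ⟨Finset.mem_univ i, ?_⟩
          have : sᶜᶜ = ({i} : Finset (Fin (m+1)))ᶜ := by rw [hi]
          simpa [Finset.compl_singleton] using this.symm
      obtain ⟨i, hi, j, hj, hij⟩ := Finset.one_lt_card.mp h2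
      rw [Finset.mem_compl] at hi hj
      refine f.map_eq_zero_of_eq _ ?_ hij
      erw [Finset.piecewise_eq_of_notMem _ _ _ hi, Finset.piecewise_eq_of_notMem _ _ _ hj]
    have hsum : ∑ s : Finset (Fin (m+1)), f (s.piecewise A B) =
        ∑ s ∈ Good, f (s.piecewise A B) :=
      (Finset.sum_subset (Finset.subset_univ Good) hzero).symm
    have hnotmem : Finset.univ ∉ Finset.image (fun i : Fin (m+1) => Finset.univ.erase i)
        Finset.univ := by
      simp only [Finset.mem_image, not_exists]
      intro i
      intro h
      rcases h with ⟨_, h⟩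
      have := Finset.mem_univ i
      rw [← h] at this
      exact (Finset.notMem_erase i _) this
    have hinj : ∀ i ∈ (Finset.univ : Finset (Fin (m+1))), ∀ j ∈ (Finset.univ : Finset (Fin (m+1))),
        Finset.univ.erase i = Finset.univ.erase j → i = j := by
      intro i _ j _ h
      by_contra hij
      have : i ∈ Finset.univ.erase j := Finset.mem_erase.mpr ⟨hij, Finset.mem_univ i⟩
      rw [← h] at this
      exact (Finset.notMem_erase i _) this
    have hGsum : ∑ s ∈ Good, f (s.piecewise A B) =
        f (Finset.univ.piecewise A B) +
        ∑ i : Fin (m+1), f ((Finset.univ.erase i).piecewise A B) := by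
      rw [hGood, Finset.sum_insert hnotmem, Finset.sum_image hinj]
    have huniv : f (Finset.univ.piecewise A B) = A.det := by
      erw [Finset.piecewise_univ]; rfl
    have herase : ∀ i : Fin (m+1),
        f ((Finset.univ.erase i).piecewise A B) =
        x * ∑ k, Matrix.adjugate A k i := by
      intro i
      have hpw : (Finset.univ.erase i).piecewise A B =
          A.updateRow i (fun _ => x) := by
        ext a b
        by_cases ha : a = i
        · subst ha
          erw [Finset.piecewise_eq_of_notMem _ _ _ (Finset.notMem_erase a _)]
          simp [hB]
        · erw [Finset.piecewise_eq_of_mem _ _ _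
            (Finset.mem_erase.mpr ⟨ha, Finset.mem_univ a⟩)]
          simp [Matrix.updateRow_ne ha]
      rw [hpw]
      show (A.updateRow i (fun _ => x)).det = _
      have : (fun _ : Fin (m+1) => x) = x • (fun _ => (1 : R)) := by ext; simp
      rw [this, Matrix.det_updateRow_smul, det_updateRow_ones]
    rw [key, hsum, hGsum, huniv]
    simp_rw [herase]
    rw [← Finset.mul_sum, hcof, Finset.sum_comm]
end

section
/- Let R be a commutative unital ring, n ≥ 1, A an n×n matrix over R, J the all-ones n×n matrix, and e the all-ones column vector. Then for every x ∈ R: adj(A + x·J)·e = adj(A)·e, and consequently cof(A + x·J) = cof(A), i.e. eᵀ·adj(A + x·J)·e = eᵀ·adj(A)·e. -/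
lemma adj_mulVec_one {R : Type*} [CommRing R] {n : ℕ}
    (A : Matrix (Fin n) (Fin n) R) (x : R) :
    (Matrix.adjugate (A + x • (Matrix.of fun _ _ => (1 : R)))).mulVec (fun _ => (1 : R))
      = (Matrix.adjugate A).mulVec (fun _ => (1 : R)) := by
  rw [← Matrix.cramer_eq_adjugate_mulVec, ← Matrix.cramer_eq_adjugate_mulVec]
  funext j
  rw [Matrix.cramer_apply, Matrix.cramer_apply, ← Matrix.det_transpose,
    ← Matrix.updateRow_transpose, ← Matrix.det_transpose (Matrix.updateCol A _ _),
    ← Matrix.updateRow_transpose]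
  apply Matrix.det_eq_of_forall_row_eq_smul_add_const (fun i => if i = j then 0 else x) j
    (by simp)
  intro i k
  by_cases hi : i = j <;>
    simp [Matrix.updateRow_apply, hi, Matrix.transpose_apply]

lemma cofSum_eq {R : Type*} [CommRing R] {n : ℕ} (hn : 1 ≤ n)
    (A : Matrix (Fin n) (Fin n) R) :
    cofSum A = dotProduct (fun _ => (1 : R))
      ((Matrix.adjugate A).mulVec (fun _ => (1 : R))) := by
  obtain ⟨m, rfl⟩ : ∃ m, n = m + 1 := ⟨n - 1, by omega⟩
  simp only [cofSum, dotProduct, Matrix.mulVec, one_mul, mul_one]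
  rw [Finset.sum_comm]
  refine Finset.sum_congr rfl fun i _ => Finset.sum_congr rfl fun j _ => ?_
  rw [Matrix.adjugate_fin_succ_eq_det_submatrix]


/-- For any `n ≥ 1`, any `n × n` matrix `A` over a commutative unital ring `R`, and
any `x ∈ R`: `adj(A + x•J) ⬝ e = adj(A) ⬝ e` (with `J` the all-ones matrix and `e` the
all-ones vector), and consequently `cof(A + x•J) = cof(A)`, i.e.
`eᵀ ⬝ adj(A + x•J) ⬝ e = eᵀ ⬝ adj(A) ⬝ e`. -/
theorem stmt_1 {R : Type*} [CommRing R] {n : ℕ} (hn : 1 ≤ n)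
    (A : Matrix (Fin n) (Fin n) R) :
    ∀ x : R,
      (Matrix.adjugate (A + x • (Matrix.of fun _ _ => (1 : R)))).mulVec (fun _ => (1 : R))
          = (Matrix.adjugate A).mulVec (fun _ => (1 : R))
      ∧ cofSum (A + x • (Matrix.of fun _ _ => (1 : R))) = cofSum A
      ∧ dotProduct (fun _ => (1 : R))
            ((Matrix.adjugate (A + x • (Matrix.of fun _ _ => (1 : R)))).mulVec
              (fun _ => (1 : R)))
          = dotProduct (fun _ => (1 : R))
              ((Matrix.adjugate A).mulVec (fun _ => (1 : R))) := by
  intro x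
  have h := adj_mulVec_one A x
  refine ⟨h, ?_, by rw [h]⟩
  rw [cofSum_eq hn, cofSum_eq hn, h]
end

section
/- Let R be a commutative unital ring and let n1, k, n2 ≥ 0. Given matrices D1 (n1×n1), A (n1×k), A' (k×n1), B (k×n2), B' (n2×k), D2 (n2×n2) over R, form the (n1+k+n2)×(n1+k+n2) block matrix D = [[D1, A, A·B], [A', I_k, B], [B'·A', B', D2]], and the block matrices M1 = [[D1, A], [A', I_k]] and M2 = [[I_k, B], [B', D2]]. Then det(D) = det(M1)·det(M2). -/
open Matrix

/-- Graham–Hoffman–Hosoya-type multiplicative determinant identity, single cut-vertex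
case. The big block matrix `D = [[D1, A, A*B], [A', 1, B], [B'*A', B', D2]]` is the
product distance matrix of a strongly connected digraph with one cut-vertex of
block-size `k` joining two strong blocks with product distance matrices
`M1 = [[D1, A], [A', 1]]` and `M2 = [[1, B], [B', D2]]`; then `det D = det M1 * det M2`. -/
theorem stmt_2 {R : Type*} [CommRing R] {n1 k n2 : ℕ}
    (D1 : Matrix (Fin n1) (Fin n1) R) (A : Matrix (Fin n1) (Fin k) R)
    (A' : Matrix (Fin k) (Fin n1) R) (B : Matrix (Fin k) (Fin n2) R)
    (B' : Matrix (Fin n2) (Fin k) R) (D2 : Matrix (Fin n2) (Fin n2) R) :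
    (Matrix.fromBlocks
        (Matrix.fromBlocks D1 A A' (1 : Matrix (Fin k) (Fin k) R))
        (Matrix.fromRows (A * B) B)
        (Matrix.fromCols (B' * A') B')
        D2).det
      = (Matrix.fromBlocks D1 A A' (1 : Matrix (Fin k) (Fin k) R)).det
          * (Matrix.fromBlocks (1 : Matrix (Fin k) (Fin k) R) B B' D2).det := by
  set M1 := Matrix.fromBlocks D1 A A' (1 : Matrix (Fin k) (Fin k) R) with hM1
  have key : (Matrix.fromBlocks M1
        (Matrix.fromRows (A * B) B)
        (Matrix.fromCols (B' * A') B')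
        D2)
      = Matrix.fromBlocks 1 0 (B' * Matrix.fromCols (0 : Matrix (Fin k) (Fin n1) R) 1) 1
        * Matrix.fromBlocks M1 (Matrix.fromRows A 1 * B) 0 (D2 - B' * B) := by
    rw [Matrix.fromBlocks_multiply]
    refine Matrix.fromBlocks_inj.mpr ⟨by simp, by simp, ?_, ?_⟩
    · rw [Matrix.mul_assoc, Matrix.fromCols_mul_fromBlocks]
      simp [Matrix.mul_fromCols]
    · rw [Matrix.mul_assoc B', ← Matrix.mul_assoc (Matrix.fromCols 0 1),
        Matrix.fromCols_mul_fromRows]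
      simp
  rw [key, Matrix.det_mul, Matrix.det_fromBlocks_zero₁₂, Matrix.det_fromBlocks_zero₂₁,
    Matrix.det_fromBlocks_one₁₁]
  simp
end

section
/- Let R be a commutative unital ring and let n1, k, n2 ≥ 0. Given matrices D1 (n1×n1), A (n1×k), A' (k×n1), B (k×n2), B' (n2×k), D2 (n2×n2) over R, form the block matrix D = [[D1, A, A·B], [A', I_k, B], [B'·A', B', D2]], M1 = [[D1, A], [A', I_k]] and M2 = [[I_k, B], [B', D2]]. If M1 and M2 are invertible, then D is invertible and, writing M1⁻¹ = [[X11, X12], [X21, X22]] and M2⁻¹ = [[Y11, Y12], [Y21, Y22]] in the corresponding block forms, D⁻¹ = [[X11, X12, 0], [X21, X22 + Y11 − I_k, Y12], [0, Y21, Y22]]; that is, D⁻¹ equals M1⁻¹ embedded in the rows and columns of the first two block-groups, plus M2⁻¹ embedded in the rows and columns of the last two block-groups, minus I_k embedded in the middle k×k block. -/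
open Matrix

lemma fromRows_add' {R : Type*} [AddCommGroup R] {m₁ m₂ n : Type*}
    (A : Matrix m₁ n R) (B : Matrix m₂ n R) (C : Matrix m₁ n R) (D : Matrix m₂ n R) :
    Matrix.fromRows A B + Matrix.fromRows C D = Matrix.fromRows (A + C) (B + D) := by
  ext (i | i) j <;> simp

lemma fromColumns_add' {R : Type*} [AddCommGroup R] {m n₁ n₂ : Type*}
    (A : Matrix m n₁ R) (B : Matrix m n₂ R) (C : Matrix m n₁ R) (D : Matrix m n₂ R) :
    Matrix.fromCols A B + Matrix.fromCols C D = Matrix.fromCols (A + C) (B + D) := by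
  ext i (j | j) <;> simp

/-- Graham–Hoffman–Hosoya-type multiplicative inverse identity, single cut-vertex case.
With `D = [[D1, A, A*B], [A', 1, B], [B'*A', B', D2]]`, `M1 = [[D1, A], [A', 1]]` and
`M2 = [[1, B], [B', D2]]`: if `M1` and `M2` are invertible then so is `D`, and writing
`M1⁻¹ = [[X11, X12], [X21, X22]]`, `M2⁻¹ = [[Y11, Y12], [Y21, Y22]]` in block form,
`D⁻¹ = [[X11, X12, 0], [X21, X22 + Y11 - 1, Y12], [0, Y21, Y22]]`. -/
theorem stmt_3 {R : Type*} [CommRing R] {n1 k n2 : ℕ}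
    (D1 : Matrix (Fin n1) (Fin n1) R) (A : Matrix (Fin n1) (Fin k) R)
    (A' : Matrix (Fin k) (Fin n1) R) (B : Matrix (Fin k) (Fin n2) R)
    (B' : Matrix (Fin n2) (Fin k) R) (D2 : Matrix (Fin n2) (Fin n2) R)
    (X11 : Matrix (Fin n1) (Fin n1) R) (X12 : Matrix (Fin n1) (Fin k) R)
    (X21 : Matrix (Fin k) (Fin n1) R) (X22 : Matrix (Fin k) (Fin k) R)
    (Y11 : Matrix (Fin k) (Fin k) R) (Y12 : Matrix (Fin k) (Fin n2) R)
    (Y21 : Matrix (Fin n2) (Fin k) R) (Y22 : Matrix (Fin n2) (Fin n2) R)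
    (hM1 : IsUnit (Matrix.fromBlocks D1 A A' (1 : Matrix (Fin k) (Fin k) R)))
    (hM2 : IsUnit (Matrix.fromBlocks (1 : Matrix (Fin k) (Fin k) R) B B' D2))
    (hX : (Matrix.fromBlocks D1 A A' (1 : Matrix (Fin k) (Fin k) R))⁻¹
            = Matrix.fromBlocks X11 X12 X21 X22)
    (hY : (Matrix.fromBlocks (1 : Matrix (Fin k) (Fin k) R) B B' D2)⁻¹
            = Matrix.fromBlocks Y11 Y12 Y21 Y22) :
    IsUnit (Matrix.fromBlocks
        (Matrix.fromBlocks D1 A A' (1 : Matrix (Fin k) (Fin k) R))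
        (Matrix.fromRows (A * B) B)
        (Matrix.fromCols (B' * A') B')
        D2)
    ∧ (Matrix.fromBlocks
        (Matrix.fromBlocks D1 A A' (1 : Matrix (Fin k) (Fin k) R))
        (Matrix.fromRows (A * B) B)
        (Matrix.fromCols (B' * A') B')
        D2)⁻¹
      = Matrix.fromBlocks
          (Matrix.fromBlocks X11 X12 X21 (X22 + Y11 - 1))
          (Matrix.fromRows (0 : Matrix (Fin n1) (Fin n2) R) Y12)
          (Matrix.fromCols (0 : Matrix (Fin n2) (Fin n1) R) Y21)
          Y22 := by
  have hd1 : IsUnit (Matrix.fromBlocks D1 A A' (1 : Matrix (Fin k) (Fin k) R)).det :=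
    (Matrix.isUnit_iff_isUnit_det _).mp hM1
  have hd2 : IsUnit (Matrix.fromBlocks (1 : Matrix (Fin k) (Fin k) R) B B' D2).det :=
    (Matrix.isUnit_iff_isUnit_det _).mp hM2
  have h1 : Matrix.fromBlocks D1 A A' (1 : Matrix (Fin k) (Fin k) R)
      * Matrix.fromBlocks X11 X12 X21 X22 = 1 := by
    rw [← hX]; exact Matrix.mul_nonsing_inv _ hd1
  have h2 : Matrix.fromBlocks (1 : Matrix (Fin k) (Fin k) R) B B' D2
      * Matrix.fromBlocks Y11 Y12 Y21 Y22 = 1 := by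
    rw [← hY]; exact Matrix.mul_nonsing_inv _ hd2
  rw [Matrix.fromBlocks_multiply, ← Matrix.fromBlocks_one, Matrix.fromBlocks_inj] at h1 h2
  obtain ⟨e1, e2, e3, e4⟩ := h1
  obtain ⟨g1, g2, g3, g4⟩ := h2
  have e3' : A' * X11 + X21 = 0 := by simpa using e3
  have e4' : A' * X12 + X22 = 1 := by simpa using e4
  have g1' : Y11 + B * Y21 = 1 := by simpa using g1
  have g2' : Y12 + B * Y22 = 0 := by simpa using g2
  have key : (Matrix.fromBlocks
        (Matrix.fromBlocks D1 A A' (1 : Matrix (Fin k) (Fin k) R))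
        (Matrix.fromRows (A * B) B)
        (Matrix.fromCols (B' * A') B')
        D2)
      * (Matrix.fromBlocks
          (Matrix.fromBlocks X11 X12 X21 (X22 + Y11 - 1))
          (Matrix.fromRows (0 : Matrix (Fin n1) (Fin n2) R) Y12)
          (Matrix.fromCols (0 : Matrix (Fin n2) (Fin n1) R) Y21)
          Y22) = 1 := by
    rw [Matrix.fromBlocks_multiply, Matrix.fromBlocks_multiply,
      Matrix.fromRows_mul_fromCols, Matrix.fromCols_mul_fromBlocks,
      Matrix.fromBlocks_mul_fromRows, Matrix.fromCols_mul_fromRows,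
      Matrix.fromRows_mul, Matrix.mul_fromCols,
      Matrix.fromBlocks_add, fromRows_add', fromColumns_add',
      show (1 : Matrix ((Fin n1 ⊕ Fin k) ⊕ Fin n2) ((Fin n1 ⊕ Fin k) ⊕ Fin n2) R)
        = Matrix.fromBlocks 1 0 0 1 from Matrix.fromBlocks_one.symm, Matrix.fromBlocks_inj]
    refine ⟨?_, ?_, ?_, ?_⟩
    · -- top-left, itself a 2x2 block matrix equal to 1
      rw [show (1 : Matrix (Fin n1 ⊕ Fin k) (Fin n1 ⊕ Fin k) R)
        = Matrix.fromBlocks 1 0 0 1 from Matrix.fromBlocks_one.symm, Matrix.fromBlocks_inj]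
      refine ⟨by simpa using e1, ?_, by simpa using e3, ?_⟩
      · -- D1*X12 + A*(X22+Y11-1) + A*B*Y21 = 0
        have hA : A * Y11 + A * B * Y21 = A := by
          rw [Matrix.mul_assoc, ← Matrix.mul_add, g1', Matrix.mul_one]
        calc D1 * X12 + A * (X22 + Y11 - 1) + A * B * Y21
            = (D1 * X12 + A * X22) + ((A * Y11 + A * B * Y21) - A) := by
              rw [Matrix.mul_sub, Matrix.mul_add, Matrix.mul_one]; abel
          _ = 0 := by rw [e2, hA]; abel
      · -- A'*X12 + 1*(X22+Y11-1) + B*Y21 = 1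
        calc A' * X12 + 1 * (X22 + Y11 - 1) + B * Y21
            = (A' * X12 + X22) + (Y11 + B * Y21) - 1 := by
              rw [Matrix.one_mul]; abel
          _ = 1 := by rw [e4', g1']; abel
    · -- top-right: fromRows = 0
      rw [← Matrix.fromRows_zero (m₁ := Fin n1) (m₂ := Fin k), Matrix.fromRows_ext_iff]
      constructor
      · rw [Matrix.mul_zero, zero_add, Matrix.mul_assoc, ← Matrix.mul_add, g2',
          Matrix.mul_zero]
      · rw [Matrix.mul_zero, zero_add, Matrix.one_mul, g2']
    · -- bottom-left: fromCols = 0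
      rw [← Matrix.fromCols_zero (n₁ := Fin n1) (n₂ := Fin k),
        Matrix.fromCols_ext_iff]
      constructor
      · rw [Matrix.mul_zero, add_zero, Matrix.mul_assoc, ← Matrix.mul_add, e3',
          Matrix.mul_zero]
      · calc B' * A' * X12 + B' * (X22 + Y11 - 1) + D2 * Y21
            = B' * (A' * X12 + X22) + (B' * Y11 + D2 * Y21) - B' := by
              rw [Matrix.mul_sub, Matrix.mul_add, Matrix.mul_one, Matrix.mul_add,
                Matrix.mul_assoc]; abel
          _ = 0 := by rw [e4', g3, Matrix.mul_one]; abel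
    · -- bottom-right
      rw [Matrix.mul_zero, zero_add, g4]
  have hinv : Invertible (Matrix.fromBlocks
        (Matrix.fromBlocks D1 A A' (1 : Matrix (Fin k) (Fin k) R))
        (Matrix.fromRows (A * B) B)
        (Matrix.fromCols (B' * A') B')
        D2) := invertibleOfRightInverse _ _ key
  exact ⟨isUnit_of_invertible _, Matrix.inv_eq_right_inv key⟩
end

section
/- Let R be a commutative unital ring and let n1, k, n2 ≥ 0. Given matrices D1 (n1×n1), A (n1×k), A' (k×n1), B (k×n2), B' (n2×k), D2 (n2×n2) over R, form the block matrix D = [[D1, A, A·B], [A', I_k, B], [B'·A', B', D2]], M1 = [[D1, A], [A', I_k]] and M2 = [[I_k, B], [B', D2]]. Then cof(D) = cof(M1)·det(M2) + det(M1)·cof(M2) − (k : R)·det(M1)·det(M2). -/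
/-- The canonical identification of `(Fin n1 ⊕ Fin k) ⊕ Fin n2` with `Fin (n1 + k + n2)`,
used to read a block matrix as an ordinary `Fin`-indexed matrix. -/
def toFin3 (n1 k n2 : ℕ) : (Fin n1 ⊕ Fin k) ⊕ Fin n2 ≃ Fin (n1 + k + n2) :=
  (Equiv.sumCongr finSumFinEquiv (Equiv.refl (Fin n2))).trans finSumFinEquiv

section GHHAux

open Matrix

set_option linter.unusedSectionVars false

variable {R : Type*} [CommRing R]

/-- The sum of all entries of the adjugate: this agrees with `cofSum` and makes sense over
an arbitrary index type. -/
def ghhPhi {ι : Type*} [Fintype ι] [DecidableEq ι] (M : Matrix ι ι R) : R :=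
  dotProduct (fun _ => (1 : R)) (M.adjugate *ᵥ fun _ => (1 : R))

lemma ghhPhi_eq_sum {ι : Type*} [Fintype ι] [DecidableEq ι] (M : Matrix ι ι R) :
    ghhPhi M = ∑ i, ∑ j, M.adjugate i j := by
  simp [ghhPhi, dotProduct, Matrix.mulVec]

lemma cofSum_eq_ghhPhi : ∀ {n : ℕ} (A : Matrix (Fin n) (Fin n) R), cofSum A = ghhPhi A
  | 0, A => by simp [cofSum, ghhPhi_eq_sum]
  | m + 1, A => by
    rw [ghhPhi_eq_sum, Finset.sum_comm (f := fun i j => A.adjugate i j)]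
    simp only [cofSum, Matrix.adjugate_fin_succ_eq_det_submatrix]

lemma ghhPhi_submatrix {ι κ : Type*} [Fintype ι] [DecidableEq ι] [Fintype κ] [DecidableEq κ]
    (e : ι ≃ κ) (M : Matrix κ κ R) : ghhPhi (M.submatrix e e) = ghhPhi M := by
  rw [ghhPhi_eq_sum, ghhPhi_eq_sum, Matrix.adjugate_submatrix_equiv_self]
  exact Fintype.sum_equiv e _ _ fun i => Fintype.sum_equiv e _ _ fun j => rfl

lemma ghhAdj_of_mul_eq_one {ι : Type*} [Fintype ι] [DecidableEq ι]
    (M N : Matrix ι ι R) (h : M * N = 1) (hd : M.det = 1) : M.adjugate = N := by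
  have h2 : N * M = 1 := mul_eq_one_comm.mp h
  calc M.adjugate = N * M * M.adjugate := by rw [h2, one_mul]
    _ = N * (M * M.adjugate) := by rw [mul_assoc]
    _ = N := by rw [Matrix.mul_adjugate, hd, one_smul, mul_one]

lemma ghhUpdateRow_fromBlocks_inl {ι κ μ ν : Type*} [DecidableEq ι] [DecidableEq κ]
    (X : Matrix ι μ R) (B : Matrix ι ν R) (C : Matrix κ μ R) (Y : Matrix κ ν R)
    (i : ι) (v : μ ⊕ ν → R) :
    (Matrix.fromBlocks X B C Y).updateRow (Sum.inl i) v =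
      Matrix.fromBlocks (X.updateRow i (v ∘ Sum.inl)) (B.updateRow i (v ∘ Sum.inr)) C Y := by
  ext r c
  rcases r with r | r <;> rcases c with c | c <;>
    simp [Matrix.updateRow_apply, Sum.inl.injEq]

lemma ghhUpdateRow_fromBlocks_inr {ι κ μ ν : Type*} [DecidableEq ι] [DecidableEq κ]
    (X : Matrix ι μ R) (B : Matrix ι ν R) (C : Matrix κ μ R) (Y : Matrix κ ν R)
    (i : κ) (v : μ ⊕ ν → R) :
    (Matrix.fromBlocks X B C Y).updateRow (Sum.inr i) v =
      Matrix.fromBlocks X B (C.updateRow i (v ∘ Sum.inl)) (Y.updateRow i (v ∘ Sum.inr)) := by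
  ext r c
  rcases r with r | r <;> rcases c with c | c <;>
    simp [Matrix.updateRow_apply, Sum.inr.injEq]

lemma ghhAdjugate_fromBlocks_diag {ι κ : Type*} [Fintype ι] [DecidableEq ι] [Fintype κ]
    [DecidableEq κ] (X : Matrix ι ι R) (Y : Matrix κ κ R) :
    (Matrix.fromBlocks X 0 0 Y).adjugate =
      Matrix.fromBlocks (Y.det • X.adjugate) 0 0 (X.det • Y.adjugate) := by
  ext i j
  rcases i with i | i <;> rcases j with j | j
  · rw [Matrix.adjugate_apply, ghhUpdateRow_fromBlocks_inl]
    have h1 : (Pi.single (Sum.inl i : ι ⊕ κ) (1:R)) ∘ Sum.inl = Pi.single i 1 := by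
      ext a; simp [Pi.single_apply, Sum.inl.injEq]
    rw [h1, Matrix.det_fromBlocks_zero₂₁, ← Matrix.adjugate_apply]
    simp [mul_comm]
  · rw [Matrix.adjugate_apply, ghhUpdateRow_fromBlocks_inr]
    have h1 : (Pi.single (Sum.inl i : ι ⊕ κ) (1:R)) ∘ Sum.inr = 0 := by
      ext a; simp [Pi.single_apply]
    rw [h1, Matrix.det_fromBlocks_zero₁₂]
    have h0 : (Y.updateRow j 0).det = 0 :=
      Matrix.det_eq_zero_of_row_eq_zero j (by simp)
    simp [h0]
  · rw [Matrix.adjugate_apply, ghhUpdateRow_fromBlocks_inl]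
    have h1 : (Pi.single (Sum.inr i : ι ⊕ κ) (1:R)) ∘ Sum.inl = 0 := by
      ext a; simp [Pi.single_apply]
    rw [h1, Matrix.det_fromBlocks_zero₂₁]
    have h0 : (X.updateRow j 0).det = 0 :=
      Matrix.det_eq_zero_of_row_eq_zero j (by simp)
    simp [h0]
  · rw [Matrix.adjugate_apply, ghhUpdateRow_fromBlocks_inr]
    have h1 : (Pi.single (Sum.inr i : ι ⊕ κ) (1:R)) ∘ Sum.inr = Pi.single i 1 := by
      ext a; simp [Pi.single_apply, Sum.inr.injEq]
    rw [h1, Matrix.det_fromBlocks_zero₁₂, ← Matrix.adjugate_apply]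
    simp

lemma ghhPhi_mul_mul {ι : Type*} [Fintype ι] [DecidableEq ι]
    (P Δ Q P' Q' : Matrix ι ι R) (hP : P * P' = 1) (hQ : Q * Q' = 1)
    (hdP : P.det = 1) (hdQ : Q.det = 1) :
    ghhPhi (P * Δ * Q) =
      dotProduct ((fun _ => (1:R)) ᵥ* Q') (Δ.adjugate *ᵥ (P' *ᵥ fun _ => (1:R))) := by
  unfold ghhPhi
  rw [Matrix.adjugate_mul_distrib, Matrix.adjugate_mul_distrib,
    ghhAdj_of_mul_eq_one P P' hP hdP, ghhAdj_of_mul_eq_one Q Q' hQ hdQ,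
    ← Matrix.mulVec_mulVec, ← Matrix.mulVec_mulVec, Matrix.dotProduct_mulVec]

/-- The key computation: the `ghhPhi` of a block matrix with identity lower-right block. -/
lemma ghh_key {ι κ : Type*} [Fintype ι] [DecidableEq ι] [Fintype κ] [DecidableEq κ]
    (X : Matrix ι ι R) (A : Matrix ι κ R) (A' : Matrix κ ι R) :
    ghhPhi (Matrix.fromBlocks (X + A * A') A A' (1 : Matrix κ κ R)) =
      dotProduct ((fun _ => 1) + (fun _ => (1:R)) ᵥ* (-A'))
          (X.adjugate *ᵥ ((fun _ => 1) + (-A) *ᵥ (fun _ => (1:R))))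
        + (Fintype.card κ : R) * X.det := by
  have hP : (Matrix.fromBlocks 1 A 0 1 : Matrix (ι ⊕ κ) (ι ⊕ κ) R) *
      Matrix.fromBlocks 1 (-A) 0 1 = 1 := by
    rw [Matrix.fromBlocks_multiply, ← Matrix.fromBlocks_one, Matrix.fromBlocks_inj]
    refine ⟨by simp, by simp, by simp, by simp⟩
  have hQ : (Matrix.fromBlocks 1 0 A' 1 : Matrix (ι ⊕ κ) (ι ⊕ κ) R) *
      Matrix.fromBlocks 1 0 (-A') 1 = 1 := by
    rw [Matrix.fromBlocks_multiply, ← Matrix.fromBlocks_one, Matrix.fromBlocks_inj]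
    refine ⟨by simp, by simp, by simp, by simp⟩
  have hdP : (Matrix.fromBlocks 1 A 0 1 : Matrix (ι ⊕ κ) (ι ⊕ κ) R).det = 1 := by
    rw [Matrix.det_fromBlocks_zero₂₁]; simp
  have hdQ : (Matrix.fromBlocks 1 0 A' 1 : Matrix (ι ⊕ κ) (ι ⊕ κ) R).det = 1 := by
    rw [Matrix.det_fromBlocks_zero₁₂]; simp
  have hfact : Matrix.fromBlocks (X + A * A') A A' (1 : Matrix κ κ R) =
      Matrix.fromBlocks 1 A 0 1 * Matrix.fromBlocks X 0 0 1 * Matrix.fromBlocks 1 0 A' 1 := by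
    rw [Matrix.fromBlocks_multiply, Matrix.fromBlocks_multiply, Matrix.fromBlocks_inj]
    refine ⟨by simp, by simp, by simp, by simp⟩
  rw [hfact, ghhPhi_mul_mul _ _ _ _ _ hP hQ hdP hdQ]
  have hu : (Matrix.fromBlocks 1 (-A) 0 1 : Matrix (ι ⊕ κ) (ι ⊕ κ) R) *ᵥ (fun _ => (1:R)) =
      Sum.elim ((fun _ => 1) + (-A) *ᵥ (fun _ => (1:R))) (fun _ => 1) := by
    funext x
    rcases x with x | x <;>
      simp [Matrix.mulVec, dotProduct, Fintype.sum_sum_type, Matrix.one_apply]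
  have hv : (fun _ => (1:R)) ᵥ* (Matrix.fromBlocks 1 0 (-A') 1 : Matrix (ι ⊕ κ) (ι ⊕ κ) R) =
      Sum.elim ((fun _ => 1) + (fun _ => (1:R)) ᵥ* (-A')) (fun _ => 1) := by
    funext x
    rcases x with x | x <;>
      simp [Matrix.vecMul, dotProduct, Fintype.sum_sum_type, Matrix.one_apply]
  have hmid : (Matrix.fromBlocks X 0 0 (1 : Matrix κ κ R)).adjugate *ᵥ
      Sum.elim ((fun _ => 1) + (-A) *ᵥ (fun _ => (1:R))) (fun _ => 1) =
      Sum.elim (X.adjugate *ᵥ ((fun _ => 1) + (-A) *ᵥ (fun _ => (1:R)))) (fun _ => X.det) := by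
    rw [ghhAdjugate_fromBlocks_diag]
    funext x
    rcases x with x | x <;>
      simp [Matrix.fromBlocks_mulVec, Matrix.smul_mulVec, Matrix.one_mulVec]
  rw [hu, hv, hmid, sumElim_dotProduct_sumElim]
  congr 1
  simp [dotProduct, Finset.sum_const, Finset.card_univ, nsmul_eq_mul]

/-- The reordering `(α ⊕ β) ⊕ γ ≃ (α ⊕ γ) ⊕ β`. -/
def ghhEquiv3 (α β γ : Type*) : (α ⊕ β) ⊕ γ ≃ (α ⊕ γ) ⊕ β :=
  (Equiv.sumAssoc α β γ).trans
    ((Equiv.sumCongr (Equiv.refl α) (Equiv.sumComm β γ)).trans (Equiv.sumAssoc α γ β).symm)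

end GHHAux

open Matrix in

/-- Graham–Hoffman–Hosoya-type multiplicative cofactor-sum identity, single cut-vertex
case. With `D = [[D1, A, A*B], [A', 1, B], [B'*A', B', D2]]`, `M1 = [[D1, A], [A', 1]]`
and `M2 = [[1, B], [B', D2]]`:
`cof(D) = cof(M1)·det(M2) + det(M1)·cof(M2) − k·det(M1)·det(M2)`. -/
theorem stmt_4 {R : Type*} [CommRing R] {n1 k n2 : ℕ}
    (D1 : Matrix (Fin n1) (Fin n1) R) (A : Matrix (Fin n1) (Fin k) R)
    (A' : Matrix (Fin k) (Fin n1) R) (B : Matrix (Fin k) (Fin n2) R)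
    (B' : Matrix (Fin n2) (Fin k) R) (D2 : Matrix (Fin n2) (Fin n2) R) :
    cofSum ((Matrix.reindex (toFin3 n1 k n2) (toFin3 n1 k n2))
        (Matrix.fromBlocks
          (Matrix.fromBlocks D1 A A' (1 : Matrix (Fin k) (Fin k) R))
          (Matrix.fromRows (A * B) B)
          (Matrix.fromCols (B' * A') B')
          D2))
      = cofSum ((Matrix.reindex finSumFinEquiv finSumFinEquiv)
            (Matrix.fromBlocks D1 A A' (1 : Matrix (Fin k) (Fin k) R)))
          * (Matrix.fromBlocks (1 : Matrix (Fin k) (Fin k) R) B B' D2).det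
        + (Matrix.fromBlocks D1 A A' (1 : Matrix (Fin k) (Fin k) R)).det
          * cofSum ((Matrix.reindex finSumFinEquiv finSumFinEquiv)
              (Matrix.fromBlocks (1 : Matrix (Fin k) (Fin k) R) B B' D2))
        - (k : R) * (Matrix.fromBlocks D1 A A' (1 : Matrix (Fin k) (Fin k) R)).det
          * (Matrix.fromBlocks (1 : Matrix (Fin k) (Fin k) R) B B' D2).det := by
  classical
  have hD1 : D1 = (D1 - A * A') + A * A' := by rw [sub_add_cancel]
  have hD2 : D2 = (D2 - B' * B) + B' * B := by rw [sub_add_cancel]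
  -- φ of M1
  have hM1phi : ghhPhi (Matrix.fromBlocks D1 A A' (1 : Matrix (Fin k) (Fin k) R)) =
      dotProduct ((fun _ => 1) + (fun _ => (1:R)) ᵥ* (-A'))
          ((D1 - A * A').adjugate *ᵥ ((fun _ => 1) + (-A) *ᵥ (fun _ => (1:R))))
        + (k : R) * (D1 - A * A').det := by
    conv_lhs => rw [hD1]
    rw [ghh_key, Fintype.card_fin]
  -- φ of M2
  have hM2eq : (Matrix.fromBlocks (1 : Matrix (Fin k) (Fin k) R) B B' D2) =
      (Matrix.fromBlocks D2 B' B (1 : Matrix (Fin k) (Fin k) R)).submatrix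
        (Equiv.sumComm (Fin k) (Fin n2)) (Equiv.sumComm (Fin k) (Fin n2)) := by
    ext i j
    rcases i with i | i <;> rcases j with j | j <;> rfl
  have hM2phi : ghhPhi (Matrix.fromBlocks (1 : Matrix (Fin k) (Fin k) R) B B' D2) =
      dotProduct ((fun _ => 1) + (fun _ => (1:R)) ᵥ* (-B))
          ((D2 - B' * B).adjugate *ᵥ ((fun _ => 1) + (-B') *ᵥ (fun _ => (1:R))))
        + (k : R) * (D2 - B' * B).det := by
    rw [hM2eq, ghhPhi_submatrix]
    conv_lhs => rw [hD2]
    rw [ghh_key, Fintype.card_fin]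
  -- φ of D
  have hDeq : (Matrix.fromBlocks
          (Matrix.fromBlocks D1 A A' (1 : Matrix (Fin k) (Fin k) R))
          (Matrix.fromRows (A * B) B)
          (Matrix.fromCols (B' * A') B')
          D2) =
      (Matrix.fromBlocks
          (Matrix.fromBlocks (D1 - A * A') 0 0 (D2 - B' * B) +
            Matrix.fromRows A B' * Matrix.fromCols A' B)
          (Matrix.fromRows A B') (Matrix.fromCols A' B) (1 : Matrix (Fin k) (Fin k) R)).submatrix
        (ghhEquiv3 (Fin n1) (Fin k) (Fin n2)) (ghhEquiv3 (Fin n1) (Fin k) (Fin n2)) := by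
    ext i j
    rcases i with (i | i) | i <;> rcases j with (j | j) | j <;>
      simp [ghhEquiv3, Matrix.mul_apply]
  have hmidD : (Matrix.fromBlocks (D1 - A * A') 0 0 (D2 - B' * B)).adjugate *ᵥ
      Sum.elim ((fun _ => 1) + (-A) *ᵥ (fun _ => (1:R)))
        ((fun _ => 1) + (-B') *ᵥ (fun _ => (1:R))) =
      Sum.elim ((D2 - B' * B).det •
          ((D1 - A * A').adjugate *ᵥ ((fun _ => 1) + (-A) *ᵥ (fun _ => (1:R)))))
        ((D1 - A * A').det •
          ((D2 - B' * B).adjugate *ᵥ ((fun _ => 1) + (-B') *ᵥ (fun _ => (1:R))))) := by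
    rw [ghhAdjugate_fromBlocks_diag]
    funext x
    rcases x with x | x <;>
      simp [Matrix.fromBlocks_mulVec, Matrix.smul_mulVec]
  have huD : (-(Matrix.fromRows A B')) *ᵥ (fun _ => (1:R)) =
      Sum.elim ((-A) *ᵥ (fun _ => (1:R))) ((-B') *ᵥ (fun _ => (1:R))) := by
    funext x
    rcases x with x | x <;> simp [Matrix.mulVec, dotProduct]
  have hvD : (fun _ => (1:R)) ᵥ* (-(Matrix.fromCols A' B)) =
      Sum.elim ((fun _ => (1:R)) ᵥ* (-A')) ((fun _ => (1:R)) ᵥ* (-B)) := by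
    funext x
    rcases x with x | x <;> simp [Matrix.vecMul, dotProduct]
  have honesplit : (fun _ : Fin n1 ⊕ Fin n2 => (1:R)) =
      Sum.elim (fun _ => (1:R)) (fun _ => (1:R)) := by
    funext x; rcases x with x | x <;> rfl
  have hDphi : ghhPhi (Matrix.fromBlocks
          (Matrix.fromBlocks D1 A A' (1 : Matrix (Fin k) (Fin k) R))
          (Matrix.fromRows (A * B) B)
          (Matrix.fromCols (B' * A') B')
          D2) =
      (D2 - B' * B).det * dotProduct ((fun _ => 1) + (fun _ => (1:R)) ᵥ* (-A'))
          ((D1 - A * A').adjugate *ᵥ ((fun _ => 1) + (-A) *ᵥ (fun _ => (1:R))))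
        + (D1 - A * A').det * dotProduct ((fun _ => 1) + (fun _ => (1:R)) ᵥ* (-B))
          ((D2 - B' * B).adjugate *ᵥ ((fun _ => 1) + (-B') *ᵥ (fun _ => (1:R))))
        + (k : R) * ((D1 - A * A').det * (D2 - B' * B).det) := by
    rw [hDeq, ghhPhi_submatrix, ghh_key, Fintype.card_fin]
    rw [honesplit, huD, hvD]
    have h1 : (Sum.elim (fun _ => (1:R)) (fun _ => (1:R)) : Fin n1 ⊕ Fin n2 → R) +
        Sum.elim ((-A) *ᵥ (fun _ => (1:R))) ((-B') *ᵥ (fun _ => (1:R))) =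
        Sum.elim ((fun _ => 1) + (-A) *ᵥ (fun _ => (1:R)))
          ((fun _ => 1) + (-B') *ᵥ (fun _ => (1:R))) := by
      funext x; rcases x with x | x <;> simp
    have h2 : (Sum.elim (fun _ => (1:R)) (fun _ => (1:R)) : Fin n1 ⊕ Fin n2 → R) +
        Sum.elim ((fun _ => (1:R)) ᵥ* (-A')) ((fun _ => (1:R)) ᵥ* (-B)) =
        Sum.elim ((fun _ => 1) + (fun _ => (1:R)) ᵥ* (-A'))
          ((fun _ => 1) + (fun _ => (1:R)) ᵥ* (-B)) := by
      funext x; rcases x with x | x <;> simp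
    rw [h1, h2, hmidD, sumElim_dotProduct_sumElim,
      dotProduct_smul, dotProduct_smul, smul_eq_mul, smul_eq_mul,
      Matrix.det_fromBlocks_zero₂₁]
    try ring
  -- determinants
  have hdet1 : (Matrix.fromBlocks D1 A A' (1 : Matrix (Fin k) (Fin k) R)).det =
      (D1 - A * A').det := by rw [Matrix.det_fromBlocks_one₂₂]
  have hdet2 : (Matrix.fromBlocks (1 : Matrix (Fin k) (Fin k) R) B B' D2).det =
      (D2 - B' * B).det := by rw [Matrix.det_fromBlocks_one₁₁]
  rw [cofSum_eq_ghhPhi, cofSum_eq_ghhPhi, cofSum_eq_ghhPhi,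
    Matrix.reindex_apply, Matrix.reindex_apply, Matrix.reindex_apply,
    ghhPhi_submatrix, ghhPhi_submatrix, ghhPhi_submatrix,
    hDphi, hM1phi, hM2phi, hdet1, hdet2]
  ring
end

section
/- Let R be a commutative unital ring, a, a' ∈ R, and p ≥ 1. Let D(K_p; a, a') be the p×p matrix with (i,j) entry equal to a if i < j, 0 if i = j, and a' if i > j. Then det(D(K_p; a, a')) = (−1)^{p−1}·a·a'·Σ_{k=0}^{p−2} a^k (a')^{p−2−k} (with the empty sum equal to 0 when p = 1); equivalently, (a − a')·det(D(K_p; a, a')) = (−1)^{p−1}·a·a'·(a^{p−1} − (a')^{p−1}). -/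
/-- The distance matrix `D(K_p; a, a')` of the bi-directed complete graph `K_p`:
the `p × p` Toeplitz matrix with `(i,j)` entry `a` if `i < j`, `0` if `i = j`,
and `a'` if `i > j`. -/
def DK {R : Type*} [CommRing R] (p : ℕ) (a a' : R) : Matrix (Fin p) (Fin p) R :=
  Matrix.of fun i j => if i < j then a else if j < i then a' else 0

section Aux

variable {R : Type*} [CommRing R]

/-- Row-operation matrix: identity with `-1` on the superdiagonal. -/
def Lmat (p : ℕ) : Matrix (Fin p) (Fin p) R :=
  Matrix.of fun i j => if i = j then 1 else if (i : ℕ) + 1 = (j : ℕ) then -1 else 0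

/-- The result of the row operations `Rᵢ ← Rᵢ - Rᵢ₊₁` applied to `DK`. -/
def Emat (p : ℕ) (a a' : R) : Matrix (Fin p) (Fin p) R :=
  Matrix.of fun i j =>
    if (i : ℕ) = p - 1 then (if (j : ℕ) = p - 1 then 0 else a')
    else if (j : ℕ) = (i : ℕ) then -a'
    else if (j : ℕ) = (i : ℕ) + 1 then a else 0

lemma Lmat_mul_DK (p : ℕ) (a a' : R) : Lmat p * DK p a a' = Emat p a a' := by
  funext i j
  rw [Matrix.mul_apply]
  by_cases hi : (i : ℕ) + 1 < p
  · set i' : Fin p := ⟨(i : ℕ) + 1, hi⟩ with hi'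
    have hne : i ≠ i' := by
      intro h
      have := congrArg Fin.val h
      simp [hi'] at this
    have hvi' : (i' : ℕ) = (i : ℕ) + 1 := rfl
    have hL : ∀ k : Fin p, (Lmat p : Matrix (Fin p) (Fin p) R) i k
        = (if k = i then 1 else 0) + (if k = i' then -1 else 0) := by
      intro k
      simp only [Lmat, Matrix.of_apply, Fin.ext_iff, hvi']
      split_ifs <;> first | ring1 | (exfalso; omega)
    have hterm : ∀ k : Fin p, Lmat p i k * DK p a a' k j
        = (if k = i then DK p a a' k j else 0) + (if k = i' then -(DK p a a' k j) else 0) := by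
      intro k
      rw [hL k]
      split_ifs <;> ring1
    rw [Finset.sum_congr rfl fun k _ => hterm k, Finset.sum_add_distrib,
      Finset.sum_ite_eq' Finset.univ i, Finset.sum_ite_eq' Finset.univ i']
    simp only [Finset.mem_univ, if_true]
    have hlast : (i : ℕ) ≠ p - 1 := by omega
    have hmk : ((⟨(i : ℕ) + 1, hi⟩ : Fin p) : ℕ) = (i : ℕ) + 1 := rfl
    have hi'v : (i' : ℕ) = (i : ℕ) + 1 := rfl
    simp only [DK, Emat, Matrix.of_apply, Fin.lt_def, hmk, hi'v, hlast, if_neg hlast, if_false]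
    split_ifs <;> first | ring1 | (exfalso; omega)
  · have hlast : (i : ℕ) = p - 1 := by
      have := i.isLt; omega
    have hL : ∀ k : Fin p, (Lmat p : Matrix (Fin p) (Fin p) R) i k
        = (if k = i then 1 else 0) := by
      intro k
      have hk := k.isLt
      simp only [Lmat, Matrix.of_apply, Fin.ext_iff]
      split_ifs <;> first | ring1 | (exfalso; omega)
    have hterm : ∀ k : Fin p, Lmat p i k * DK p a a' k j
        = (if k = i then DK p a a' k j else 0) := by
      intro k
      rw [hL k]
      split_ifs <;> ring1
    rw [Finset.sum_congr rfl fun k _ => hterm k, Finset.sum_ite_eq' Finset.univ i]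
    simp only [Finset.mem_univ, if_true]
    simp only [DK, Emat, Matrix.of_apply, Fin.lt_def, hlast, if_pos rfl]
    have hj := j.isLt
    split_ifs <;> first | ring1 | (exfalso; omega)

lemma det_Lmat (p : ℕ) : (Lmat p : Matrix (Fin p) (Fin p) R).det = 1 := by
  rw [Matrix.det_of_upperTriangular]
  · simp [Lmat]
  · intro i j hij
    have : ¬ i = j := by intro h; subst h; exact lt_irrefl _ hij
    have h2 : (i : ℕ) + 1 ≠ (j : ℕ) := by
      have : (j : ℕ) < (i : ℕ) := hij
      omega
    simp [Lmat, this, h2]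

lemma det_DK_eq_det_Emat (p : ℕ) (a a' : R) : (DK p a a').det = (Emat p a a').det := by
  rw [← Lmat_mul_DK, Matrix.det_mul, det_Lmat, one_mul]

lemma det_Emat (a a' : R) : ∀ m : ℕ,
    (Emat (m + 1) a a').det
      = (-1 : R) ^ m * a * a' * ∑ k ∈ Finset.range m, a ^ k * a' ^ (m - 1 - k) := by
  intro m
  induction m with
  | zero =>
    rw [Matrix.det_fin_one]
    simp [Emat]
  | succ m ih =>
    rw [Matrix.det_succ_column_zero]
    have h0 : (0 : Fin (m + 2)) ≠ Fin.last (m + 1) := by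
      intro h
      have := congrArg Fin.val h
      simp [Fin.last] at this
    rw [Finset.sum_eq_add_of_mem (0 : Fin (m + 2)) (Fin.last (m + 1))
      (Finset.mem_univ _) (Finset.mem_univ _) h0 ?_]
    · -- the two surviving terms
      have hminor0 : (Emat (m + 2) a a').submatrix (Fin.succAbove 0) Fin.succ
          = Emat (m + 1) a a' := by
        funext r c
        simp only [Matrix.submatrix_apply, Fin.succAbove_zero, Emat, Matrix.of_apply,
          Fin.val_succ]
        have hr := r.isLt
        split_ifs <;> first | rfl | (exfalso; omega)
      have hminorlast : ((Emat (m + 2) a a').submatrix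
          (Fin.succAbove (Fin.last (m + 1))) Fin.succ).det = a ^ (m + 1) := by
        rw [Matrix.det_of_lowerTriangular]
        · have : ∀ r : Fin (m + 1), ((Emat (m + 2) a a').submatrix
              (Fin.succAbove (Fin.last (m + 1))) Fin.succ) r r = a := by
            intro r
            have hr := r.isLt
            simp only [Matrix.submatrix_apply, Fin.succAbove_last, Emat, Matrix.of_apply,
              Fin.coe_castSucc, Fin.val_succ]
            split_ifs <;> first | rfl | (exfalso; omega)
          rw [Finset.prod_congr rfl fun r _ => this r, Finset.prod_const, Finset.card_univ,
            Fintype.card_fin]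
        · intro r c hrc
          have hlt : (r : ℕ) < (c : ℕ) := hrc
          have hr := r.isLt
          simp only [Matrix.submatrix_apply, Fin.succAbove_last, Emat, Matrix.of_apply,
            Fin.coe_castSucc, Fin.val_succ]
          split_ifs <;> first | rfl | (exfalso; omega)
      have hE00 : Emat (m + 2) a a' 0 0 = -a' := by
        simp only [Emat, Matrix.of_apply, Fin.val_zero]
        split_ifs <;> first | rfl | (exfalso; omega)
      have hElast0 : Emat (m + 2) a a' (Fin.last (m + 1)) 0 = a' := by
        simp only [Emat, Matrix.of_apply, Fin.val_zero, Fin.val_last]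
        split_ifs <;> first | rfl | (exfalso; omega)
      rw [hminor0, hminorlast, ih, hE00, hElast0]
      simp only [Fin.val_zero, pow_zero, one_mul, Fin.val_last]
      have hsum : ∑ k ∈ Finset.range (m + 1), a ^ k * a' ^ (m + 1 - 1 - k)
          = a' * (∑ k ∈ Finset.range m, a ^ k * a' ^ (m - 1 - k)) + a ^ m := by
        rw [Finset.sum_range_succ, Finset.mul_sum]
        have : ∀ k ∈ Finset.range m, a ^ k * a' ^ (m + 1 - 1 - k)
            = a' * (a ^ k * a' ^ (m - 1 - k)) := by
          intro k hk
          rw [Finset.mem_range] at hk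
          have : m + 1 - 1 - k = (m - 1 - k) + 1 := by omega
          rw [this, pow_succ]
          ring
        rw [Finset.sum_congr rfl this]
        simp
      rw [hsum, pow_succ]
      ring
    · intro c _ hne
      have h1 : (c : ℕ) ≠ 0 := fun h => hne.1 (Fin.ext h)
      have h2 : (c : ℕ) ≠ m + 1 := fun h => hne.2 (Fin.ext h)
      have hE : Emat (m + 2) a a' c 0 = 0 := by
        have hc2 : ¬ ((c : ℕ) = m + 2 - 1) := by omega
        have hc0 : ¬ ((0 : ℕ) = (c : ℕ)) := by omega
        have hc3 : ¬ ((0 : ℕ) = (c : ℕ) + 1) := by omega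
        simp only [Emat, Matrix.of_apply, Fin.val_zero, if_neg hc2, if_neg hc0, if_neg hc3]
        split_ifs <;> first | rfl | (exfalso; omega)
      rw [hE]
      ring

end Aux

/-- For `p ≥ 1`, the determinant of `D(K_p; a, a')` is
`(−1)^(p−1) · a · a' · Σ_{k=0}^{p−2} a^k (a')^(p−2−k)`; equivalently,
`(a − a') · det(D(K_p; a, a')) = (−1)^(p−1) · a · a' · (a^(p−1) − (a')^(p−1))`. -/
theorem stmt_8 {R : Type*} [CommRing R] (a a' : R) {p : ℕ} (hp : 1 ≤ p) :
    (DK p a a').det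
        = (-1 : R) ^ (p - 1) * a * a'
            * ∑ k ∈ Finset.range (p - 1), a ^ k * a' ^ (p - 2 - k)
    ∧ (a - a') * (DK p a a').det
        = (-1 : R) ^ (p - 1) * a * a' * (a ^ (p - 1) - a' ^ (p - 1)) := by
  obtain ⟨m, rfl⟩ : ∃ m, p = m + 1 := ⟨p - 1, by omega⟩
  have h1 : (DK (m + 1) a a').det
      = (-1 : R) ^ m * a * a' * ∑ k ∈ Finset.range m, a ^ k * a' ^ (m - 1 - k) := by
    rw [det_DK_eq_det_Emat, det_Emat]
  have hsub1 : m + 1 - 1 = m := by omega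
  have hsub2 : ∀ k, m + 1 - 2 - k = m - 1 - k := by intro k; omega
  constructor
  · rw [h1, hsub1]
    exact congrArg _ (Finset.sum_congr rfl fun k _ => by rw [hsub2 k])
  · rw [h1, hsub1]
    have := geom_sum₂_mul a a' m
    calc (a - a') * ((-1 : R) ^ m * a * a' * ∑ k ∈ Finset.range m, a ^ k * a' ^ (m - 1 - k))
        = (-1 : R) ^ m * a * a' * ((∑ k ∈ Finset.range m, a ^ k * a' ^ (m - 1 - k)) * (a - a')) := by
          ring
      _ = (-1 : R) ^ m * a * a' * (a ^ m - a' ^ m) := by rw [this]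
end

section
/- Let T be a tree (a connected acyclic simple graph) on n vertices with n ≥ 2, and let D ∈ ℤ^{n×n} be its path-distance matrix, i.e. D_{ij} is the length of the unique path in T between vertices i and j. Then det(D) = (−1)^{n−1}·2^{n−2}·(n−1) and cof(D) = (−2)^{n−1}. -/
open Matrix SimpleGraph Finset

section GraphLemmas

variable {n : ℕ}

lemma exists_adj' {V : Type*} (G : SimpleGraph V) (hc : G.Connected)
    {v w : V} (hvw : v ≠ w) : ∃ x, G.Adj v x := by
  obtain ⟨p⟩ := hc v w
  cases p with
  | nil => exact absurd rfl hvw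
  | cons h _ => exact ⟨_, h⟩

lemma exists_leaf (hn : 2 ≤ n) (G : SimpleGraph (Fin n)) (hG : G.IsTree) :
    ∃ v u, G.Adj v u ∧ ∀ w, G.Adj v w → w = u := by
  classical
  have hnt : Nontrivial (Fin n) := Fin.nontrivial_iff_two_le.mpr hn
  have hpos : ∀ v : Fin n, 0 < G.degree v := by
    intro v
    rw [SimpleGraph.degree_pos_iff_exists_adj]
    obtain ⟨w, hw⟩ := exists_ne v
    exact exists_adj' G hG.isConnected hw.symm
  have hsum : ∑ v, G.degree v = 2 * (n - 1) := by
    rw [SimpleGraph.sum_degrees_eq_twice_card_edges]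
    have := hG.card_edgeFinset
    rw [Fintype.card_fin] at this
    omega
  have hex : ∃ v : Fin n, G.degree v = 1 := by
    by_contra h
    push_neg at h
    have h2 : ∀ v : Fin n, 2 ≤ G.degree v := by
      intro v
      have := hpos v
      have := h v
      omega
    have : (Finset.univ : Finset (Fin n)).card * 2 ≤ ∑ v, G.degree v :=
      Finset.card_nsmul_le_sum _ _ _ fun v _ => h2 v
    rw [hsum, Finset.card_univ, Fintype.card_fin] at this
    omega
  obtain ⟨v, hv⟩ := hex
  rw [← SimpleGraph.card_neighborFinset_eq_degree, Finset.card_eq_one] at hv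
  obtain ⟨u, hu⟩ := hv
  refine ⟨v, u, ?_, ?_⟩
  · have : u ∈ G.neighborFinset v := hu ▸ Finset.mem_singleton_self u
    exact (SimpleGraph.mem_neighborFinset _ _ _).mp this
  · intro w hw
    have : w ∈ G.neighborFinset v := (SimpleGraph.mem_neighborFinset _ _ _).mpr hw
    rw [hu, Finset.mem_singleton] at this
    exact this

lemma leaf_dist (G : SimpleGraph (Fin n)) (hG : G.IsTree) {v u : Fin n} (hadj : G.Adj v u)
    (huniq : ∀ w, G.Adj v w → w = u) {j : Fin n} (hj : j ≠ v) :
    G.dist v j = G.dist u j + 1 := by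
  have hvu : G.dist v u = 1 := SimpleGraph.dist_eq_one_iff_adj.mpr hadj
  have hub : G.dist v j ≤ G.dist v u + G.dist u j := hG.isConnected.dist_triangle
  have hne : G.dist v j ≠ 0 := by
    rw [SimpleGraph.dist_ne_zero_iff_ne_and_reachable]
    exact ⟨hj.symm, hG.isConnected v j⟩
  obtain ⟨p, hp⟩ := SimpleGraph.exists_walk_of_dist_ne_zero hne
  cases p with
  | nil => simp at hp; omega
  | cons h q =>
    have h1 : G.dist u j ≤ q.length := by
      rw [← huniq _ h]; exact SimpleGraph.dist_le q
    rw [SimpleGraph.Walk.length_cons] at hp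
    omega

lemma exists_walk_avoid (G : SimpleGraph (Fin n)) (hG : G.IsTree) {v u : Fin n}
    (hadj : G.Adj v u) (huniq : ∀ w, G.Adj v w → w = u) {a b : Fin n}
    (ha : a ≠ v) (hb : b ≠ v) :
    ∃ p : G.Walk a b, p.length = G.dist a b ∧ v ∉ p.support := by
  obtain ⟨p, hpath, hlen⟩ := hG.isConnected.exists_path_of_dist a b
  refine ⟨p, hlen, ?_⟩
  intro hv
  have hspec := p.take_spec hv
  have hnd : ((p.takeUntil v hv).support ++ (p.dropUntil v hv).support.tail).Nodup := by
    rw [← SimpleGraph.Walk.support_append, hspec]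
    exact hpath.support_nodup
  obtain ⟨w₁, h₁, r₁, hr₁⟩ :=
    SimpleGraph.Walk.exists_eq_cons_of_ne (Ne.symm ha) (p.takeUntil v hv).reverse
  have hw₁ : w₁ = u := huniq _ h₁
  have hu1 : u ∈ (p.takeUntil v hv).support := by
    have : u ∈ (p.takeUntil v hv).reverse.support := by
      rw [hr₁, SimpleGraph.Walk.support_cons]
      exact List.mem_cons_of_mem _ (hw₁ ▸ r₁.start_mem_support)
    rwa [SimpleGraph.Walk.support_reverse, List.mem_reverse] at this
  obtain ⟨w₂, h₂, r₂, hr₂⟩ :=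
    SimpleGraph.Walk.exists_eq_cons_of_ne (Ne.symm hb) (p.dropUntil v hv)
  have hw₂ : w₂ = u := huniq _ h₂
  have hu2 : u ∈ (p.dropUntil v hv).support.tail := by
    rw [hr₂, SimpleGraph.Walk.support_cons]
    exact hw₂ ▸ r₂.start_mem_support
  exact (List.nodup_append'.mp hnd).2.2 hu1 hu2

end GraphLemmas


open Matrix SimpleGraph Finset

section Comap

variable {n : ℕ} {G : SimpleGraph (Fin (n + 1))} {v : Fin (n + 1)} {φ : Fin n → Fin (n + 1)}

lemma lift_walk (hinj : Function.Injective φ)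
    (hsurj : ∀ w, w ≠ v → ∃ i, φ i = w) :
    ∀ {a b : Fin (n + 1)} (p : G.Walk a b), v ∉ p.support →
      ∀ a' b', φ a' = a → φ b' = b → ∃ q : (G.comap φ).Walk a' b', q.length = p.length := by
  intro a b p
  induction p with
  | nil =>
    intro _ a' b' ha hb
    cases hinj (ha.trans hb.symm)
    exact ⟨.nil, rfl⟩
  | cons h r ih =>
    rename_i x y z
    intro hp a' b' ha hb
    have hyv : y ≠ v := by
      intro hy
      exact hp (by rw [SimpleGraph.Walk.support_cons, ← hy]
                   exact List.mem_cons_of_mem _ r.start_mem_support)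
    obtain ⟨y', hy'⟩ := hsurj _ hyv
    have hvr : v ∉ r.support := fun hh =>
      hp (by rw [SimpleGraph.Walk.support_cons]; exact List.mem_cons_of_mem _ hh)
    obtain ⟨q, hq⟩ := ih hvr y' b' hy' hb
    have hadj' : (G.comap φ).Adj a' y' := by
      show G.Adj (φ a') (φ y')
      rw [ha, hy']
      exact h
    exact ⟨.cons hadj' q, by simp [hq]⟩

lemma comap_tree_dist (hG : G.IsTree) {u : Fin (n + 1)} (hadj : G.Adj v u)
    (huniq : ∀ w, G.Adj v w → w = u) (hinj : Function.Injective φ)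
    (hφv : ∀ i, φ i ≠ v) (hsurj : ∀ w, w ≠ v → ∃ i, φ i = w) [Nonempty (Fin n)] :
    (G.comap φ).IsTree ∧ ∀ a b : Fin n, (G.comap φ).dist a b = G.dist (φ a) (φ b) := by
  have hlift : ∀ a b : Fin n, ∃ q : (G.comap φ).Walk a b, q.length = G.dist (φ a) (φ b) := by
    intro a b
    obtain ⟨p, hplen, hpv⟩ := exists_walk_avoid G hG hadj huniq (hφv a) (hφv b)
    obtain ⟨q, hq⟩ := lift_walk hinj hsurj p hpv a b rfl rfl
    exact ⟨q, hq.trans hplen⟩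
  have hconn : (G.comap φ).Connected := by
    rw [SimpleGraph.connected_iff]
    exact ⟨fun a b => ⟨(hlift a b).choose⟩, inferInstance⟩
  have hmapinj : Function.Injective (SimpleGraph.Hom.comap φ G) := hinj
  have hdist : ∀ a b : Fin n, (G.comap φ).dist a b = G.dist (φ a) (φ b) := by
    intro a b
    obtain ⟨q, hq⟩ := hlift a b
    have h1 : (G.comap φ).dist a b ≤ G.dist (φ a) (φ b) := hq ▸ SimpleGraph.dist_le q
    obtain ⟨q₀, hq₀⟩ := hconn.exists_walk_length_eq_dist a b
    have h2 : G.dist (φ a) (φ b) ≤ (G.comap φ).dist a b := by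
      have := SimpleGraph.dist_le (q₀.map (SimpleGraph.Hom.comap φ G))
      rwa [SimpleGraph.Walk.length_map, hq₀] at this
    omega
  refine ⟨⟨hconn, ?_⟩, hdist⟩
  intro a c hc
  exact hG.IsAcyclic (c.map (SimpleGraph.Hom.comap φ G)) (hc.map hmapinj)

end Comap

section MatrixLemmas

lemma det_step {n : ℕ} (M : Matrix (Fin (n + 1)) (Fin (n + 1)) ℚ) {u' : Fin (n + 1)}
    (hu' : u' ≠ Fin.last n)
    (hrow : ∀ j, j ≠ Fin.last n → M (Fin.last n) j = M u' j + 1)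
    (hcol : ∀ i, i ≠ Fin.last n → M i (Fin.last n) = M i u' + 1)
    (hdiag : M (Fin.last n) (Fin.last n) = M u' (Fin.last n) - 1) :
    M.det = -2 * (Matrix.of fun i j : Fin n => M i.castSucc j.castSucc + 2⁻¹).det := by
  classical
  set lst := Fin.last n with hlst
  set B := M.updateRow lst (M lst + (-1 : ℚ) • M u') with hB
  set C := B.updateCol lst (fun i => B i lst + (-1 : ℚ) • B i u') with hC
  have hdetB : B.det = M.det := Matrix.det_updateRow_add_smul_self M (Ne.symm hu') _
  have hdetC : C.det = B.det := Matrix.det_updateCol_add_smul_self B (Ne.symm hu') _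
  have hBrow : ∀ i, i ≠ lst → ∀ j, B i j = M i j := by
    intro i hi j
    rw [hB, Matrix.updateRow_ne hi]
  have hCin : ∀ i j : Fin n, C i.castSucc j.castSucc = M i.castSucc j.castSucc := by
    intro i j
    rw [hC, Matrix.updateCol_ne (Fin.castSucc_lt_last j).ne,
      hBrow _ (Fin.castSucc_lt_last i).ne]
  have hClr : ∀ j : Fin n, C lst j.castSucc = 1 := by
    intro j
    rw [hC, Matrix.updateCol_ne (Fin.castSucc_lt_last j).ne, hB, Matrix.updateRow_self]
    have := hrow j.castSucc (Fin.castSucc_lt_last j).ne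
    simp only [Pi.add_apply, Pi.smul_apply, smul_eq_mul, this]
    ring
  have hClc : ∀ i : Fin n, C i.castSucc lst = 1 := by
    intro i
    rw [hC, Matrix.updateCol_self, hBrow _ (Fin.castSucc_lt_last i).ne,
      hBrow _ (Fin.castSucc_lt_last i).ne]
    have := hcol i.castSucc (Fin.castSucc_lt_last i).ne
    simp only [smul_eq_mul, this]
    ring
  have hCll : C lst lst = -2 := by
    rw [hC, Matrix.updateCol_self, hB, Matrix.updateRow_self]
    have h2 := hrow u' hu'
    simp only [Pi.add_apply, Pi.smul_apply, smul_eq_mul, hdiag, h2]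
    ring
  -- block decomposition
  have hcs : ∀ i : Fin n, (finSumFinEquiv (Sum.inl i) : Fin (n + 1)) = i.castSucc := by
    intro i
    rw [finSumFinEquiv_apply_left]
    rfl
  have hlastE : ∀ x : Fin 1, (finSumFinEquiv (Sum.inr x) : Fin (n + 1)) = lst := by
    intro x
    have h0 : (x : ℕ) = 0 := Nat.lt_one_iff.mp x.isLt
    rw [finSumFinEquiv_apply_right]
    ext
    simp only [Fin.natAdd, Fin.val_last, hlst]
    omega
  have hblock : C.submatrix finSumFinEquiv finSumFinEquiv =
      Matrix.fromBlocks (Matrix.of fun i j : Fin n => M i.castSucc j.castSucc)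
        (Matrix.of fun _ _ => 1) (Matrix.of fun _ _ => 1) !![(-2 : ℚ)] := by
    ext i j
    cases i with
    | inl i =>
      cases j with
      | inl j =>
        simp only [Matrix.submatrix_apply, hcs, Matrix.fromBlocks_apply₁₁, Matrix.of_apply]
        exact hCin i j
      | inr x =>
        simp only [Matrix.submatrix_apply, hcs, hlastE, Matrix.fromBlocks_apply₁₂]
        exact hClc i
    | inr x =>
      cases j with
      | inl j =>
        simp only [Matrix.submatrix_apply, hcs, hlastE, Matrix.fromBlocks_apply₂₁]
        exact hClr j
      | inr y =>
        fin_cases x <;> fin_cases y <;>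
          simp [Matrix.submatrix_apply, hlastE, hCll]
  have hdetCE : C.det = (Matrix.fromBlocks (Matrix.of fun i j : Fin n => M i.castSucc j.castSucc)
      (Matrix.of fun _ _ => 1) (Matrix.of fun _ _ => 1) !![(-2 : ℚ)]).det := by
    rw [← hblock, Matrix.det_submatrix_equiv_self]
  have hmulinv : (!![(-2 : ℚ)]) * !![-(2⁻¹ : ℚ)] = 1 := by
    ext i j
    fin_cases i <;> fin_cases j <;> simp [Matrix.mul_apply] <;> norm_num
  haveI hinvD : Invertible (!![(-2 : ℚ)]) :=
    Matrix.invertibleOfIsUnitDet _ (by simp [Matrix.det_fin_one]; try norm_num)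
  have hinvOf : (⅟(!![(-2 : ℚ)]) : Matrix (Fin 1) (Fin 1) ℚ) = !![-(2⁻¹ : ℚ)] :=
    invOf_eq_right_inv hmulinv
  rw [hdetB.symm, hdetC.symm, hdetCE, Matrix.det_fromBlocks₂₂, hinvOf]
  have hdetD : (!![(-2 : ℚ)]).det = -2 := by simp [Matrix.det_fin_one]
  rw [hdetD]
  refine congrArg (fun t => -2 * t) (congrArg Matrix.det ?_)
  ext i j
  simp [Matrix.mul_apply, Matrix.sub_apply, Fin.sum_univ_one]
  try ring

lemma sum_adjugate_eq_cofSum {R : Type*} [CommRing R] {m : ℕ}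
    (A : Matrix (Fin (m + 1)) (Fin (m + 1)) R) :
    ∑ i, ∑ j, A.adjugate i j = cofSum A := by
  rw [Finset.sum_comm (f := fun i j => A.adjugate i j)]
  exact Finset.sum_congr rfl fun j _ => Finset.sum_congr rfl fun i _ =>
    Matrix.adjugate_fin_succ_eq_det_submatrix A i j

lemma cofSum_map {R S : Type*} [CommRing R] [CommRing S] (f : R →+* S) {m : ℕ}
    (A : Matrix (Fin m) (Fin m) R) : cofSum (A.map f) = f (cofSum A) := by
  cases m with
  | zero => simp [cofSum]
  | succ m =>
    show (∑ i : Fin (m + 1), ∑ j : Fin (m + 1), (-1 : S) ^ ((i : ℕ) + (j : ℕ)) *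
        ((A.map f).submatrix i.succAbove j.succAbove).det) =
      f (∑ i : Fin (m + 1), ∑ j : Fin (m + 1), (-1 : R) ^ ((i : ℕ) + (j : ℕ)) *
        (A.submatrix i.succAbove j.succAbove).det)
    rw [map_sum]
    refine Finset.sum_congr rfl fun i _ => ?_
    rw [map_sum]
    refine Finset.sum_congr rfl fun j _ => ?_
    rw [_root_.map_mul, RingHom.map_det, Matrix.submatrix_map, map_pow, map_neg, _root_.map_one]
    rfl

lemma adj_sum_eq {m : ℕ} (A : Matrix (Fin m) (Fin m) ℚ) (hA : IsUnit A.det) :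
    (∑ i, ∑ j, A.adjugate i j) =
      (A + Matrix.replicateCol (Fin 1) (1 : Fin m → ℚ) * Matrix.replicateRow (Fin 1) (1 : Fin m → ℚ)).det - A.det := by
  have hinv : A * A⁻¹ = 1 := Matrix.mul_nonsing_inv A hA
  have h1 : A + Matrix.replicateCol (Fin 1) (1 : Fin m → ℚ) * Matrix.replicateRow (Fin 1) (1 : Fin m → ℚ) =
      A * (1 + A⁻¹ * (Matrix.replicateCol (Fin 1) (1 : Fin m → ℚ) * Matrix.replicateRow (Fin 1) (1 : Fin m → ℚ))) := by
    rw [Matrix.mul_add, Matrix.mul_one, ← Matrix.mul_assoc, hinv, Matrix.one_mul]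
  have hadj : A.adjugate = A.det • A⁻¹ := by
    calc A.adjugate = (A⁻¹ * A) * A.adjugate := by rw [Matrix.nonsing_inv_mul A hA, Matrix.one_mul]
    _ = A⁻¹ * (A * A.adjugate) := by rw [Matrix.mul_assoc]
    _ = A⁻¹ * (A.det • 1) := by rw [Matrix.mul_adjugate]
    _ = A.det • A⁻¹ := by rw [Matrix.mul_smul, Matrix.mul_one]
  have hsum : (1 : Fin m → ℚ) ⬝ᵥ (A⁻¹ *ᵥ 1) = ∑ i, ∑ j, A⁻¹ i j := by
    simp [dotProduct, Matrix.mulVec]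
  rw [h1, Matrix.det_mul, ← Matrix.mul_assoc, ← Matrix.replicateCol_mulVec]
  erw [Matrix.det_one_add_replicateCol_mul_replicateRow]
  rw [hsum, hadj]
  simp only [Matrix.smul_apply, smul_eq_mul]
  simp_rw [← Finset.mul_sum]
  ring

end MatrixLemmas

section Key

lemma key_det (n : ℕ) (hn : 2 ≤ n) : ∀ (G : SimpleGraph (Fin n)), G.IsTree → ∀ k : ℚ,
    (Matrix.of fun i j => (G.dist i j : ℚ) + k).det
      = (-1) ^ (n - 1) * 2 ^ (n - 2) * ((n : ℚ) - 1 + 2 * k) := by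
  induction n, hn using Nat.le_induction with
  | base =>
    intro G hG k
    have h01 : G.Adj 0 1 := by
      have hne : (0 : Fin 2) ≠ 1 := by decide
      obtain ⟨x, hx⟩ := exists_adj' G hG.isConnected hne
      have hx0 : x ≠ 0 := hx.ne'
      have : x = 1 := by omega
      rwa [this] at hx
    have d01 : G.dist 0 1 = 1 := SimpleGraph.dist_eq_one_iff_adj.mpr h01
    have d10 : G.dist 1 0 = 1 := SimpleGraph.dist_eq_one_iff_adj.mpr h01.symm
    rw [Matrix.det_fin_two]
    simp only [Matrix.of_apply, SimpleGraph.dist_self, d01, d10]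
    push_cast
    ring
  | succ n hn ih =>
    intro G hG k
    obtain ⟨v, u, hadj, huniq⟩ := exists_leaf (by omega) G hG
    set σ : Equiv.Perm (Fin (n + 1)) := Equiv.swap (Fin.last n) v with hσ
    have hσlast : σ (Fin.last n) = v := Equiv.swap_apply_left _ _
    set φ : Fin n → Fin (n + 1) := fun i => σ i.castSucc with hφ
    have hφv : ∀ i, φ i ≠ v := by
      intro i h
      have h2 : (i.castSucc : Fin (n + 1)) = Fin.last n := σ.injective (h.trans hσlast.symm)
      exact (Fin.castSucc_lt_last i).ne h2
    have hinj : Function.Injective φ := fun i j h =>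
      Fin.castSucc_injective _ (σ.injective h)
    have hsurj : ∀ w, w ≠ v → ∃ i, φ i = w := by
      intro w hw
      have h1 : σ.symm w ≠ Fin.last n := by
        intro h
        apply hw
        rw [← hσlast, ← h, Equiv.apply_symm_apply]
      obtain ⟨i, hi⟩ := Fin.exists_castSucc_eq.mpr h1
      exact ⟨i, by rw [hφ]; simp only; rw [hi, Equiv.apply_symm_apply]⟩
    haveI : Nonempty (Fin n) := ⟨⟨0, by omega⟩⟩
    obtain ⟨hG', hdist'⟩ := comap_tree_dist hG hadj huniq hinj hφv hsurj
    -- the matrix step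
    have hσu : σ (σ.symm u) = u := σ.apply_symm_apply u
    have huv : u ≠ v := hadj.ne'
    have hu'lst : σ.symm u ≠ Fin.last n := by
      intro h
      apply huv
      rw [← hσu, h, hσlast]
    have hσne : ∀ j : Fin (n + 1), j ≠ Fin.last n → σ j ≠ v := by
      intro j hj h
      exact hj (σ.injective (h.trans hσlast.symm))
    set M : Matrix (Fin (n + 1)) (Fin (n + 1)) ℚ :=
      (Matrix.of fun i j => (G.dist i j : ℚ) + k).submatrix σ σ with hM
    have hMapp : ∀ i j, M i j = (G.dist (σ i) (σ j) : ℚ) + k := fun i j => rfl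
    have hdu : ∀ w : Fin (n + 1), w ≠ v → (G.dist v w : ℚ) = (G.dist u w : ℚ) + 1 := by
      intro w hw
      rw [leaf_dist G hG hadj huniq hw]
      push_cast
      ring
    have hrow : ∀ j, j ≠ Fin.last n → M (Fin.last n) j = M (σ.symm u) j + 1 := by
      intro j hj
      rw [hMapp, hMapp, hσlast, hσu, hdu _ (hσne j hj)]
      ring
    have hcol : ∀ i, i ≠ Fin.last n → M i (Fin.last n) = M i (σ.symm u) + 1 := by
      intro i hi
      rw [hMapp, hMapp, hσlast, hσu, SimpleGraph.dist_comm,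
        hdu _ (hσne i hi), SimpleGraph.dist_comm (u := u)]
      ring
    have hdiag : M (Fin.last n) (Fin.last n) = M (σ.symm u) (Fin.last n) - 1 := by
      rw [hMapp, hMapp, hσlast, hσu, SimpleGraph.dist_self]
      have : G.dist u v = 1 := SimpleGraph.dist_eq_one_iff_adj.mpr hadj.symm
      rw [this]
      push_cast
      ring
    have hstep := det_step M hu'lst hrow hcol hdiag
    have hdet1 : M.det = (Matrix.of fun i j => (G.dist i j : ℚ) + k).det :=
      Matrix.det_submatrix_equiv_self σ _
    have hinner : (Matrix.of fun i j : Fin n => M i.castSucc j.castSucc + 2⁻¹) =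
        (Matrix.of fun i j => ((G.comap φ).dist i j : ℚ) + (k + 2⁻¹)) := by
      ext i j
      simp only [Matrix.of_apply]
      rw [hMapp, hdist' i j]
      push_cast
      ring
    rw [hinner] at hstep
    rw [← hdet1, hstep, ih (G.comap φ) hG' (k + 2⁻¹)]
    obtain ⟨m, rfl⟩ : ∃ m, n = m + 2 := ⟨n - 2, by omega⟩
    show -2 * ((-1) ^ (m + 1) * 2 ^ m * _) = (-1) ^ (m + 2) * 2 ^ (m + 1) * _
    push_cast
    ring
  done

end Key

/-- Graham–Pollak theorem and its cofactor-sum companion: for a tree `T` on `n ≥ 2`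
vertices with path-distance matrix `D` (so `D i j` is the length of the unique path
between `i` and `j`), one has `det D = (−1)^(n−1)·2^(n−2)·(n−1)` and
`cof D = (−2)^(n−1)`. -/
theorem stmt_10 {n : ℕ} (hn : 2 ≤ n) (G : SimpleGraph (Fin n)) (hG : G.IsTree)
    (D : Matrix (Fin n) (Fin n) ℤ) (hD : ∀ i j, D i j = (G.dist i j : ℤ)) :
    D.det = (-1 : ℤ) ^ (n - 1) * 2 ^ (n - 2) * ((n : ℤ) - 1)
    ∧ cofSum D = (-2 : ℤ) ^ (n - 1) := by
  have hkey := key_det n hn G hG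
  set f : ℤ →+* ℚ := Int.castRingHom ℚ with hf
  have hmap0 : D.map f = Matrix.of fun i j => (G.dist i j : ℚ) + 0 := by
    ext i j
    simp [Matrix.map_apply, hD, hf]
  have hdmap : f D.det = (D.map f).det := by
    rw [RingHom.map_det, RingHom.mapMatrix_apply]
  have hdetq : ((D.det : ℤ) : ℚ) = (-1 : ℚ) ^ (n - 1) * 2 ^ (n - 2) * ((n : ℚ) - 1) := by
    have h2 := hdmap
    rw [hmap0, hkey 0] at h2
    rw [show ((D.det : ℤ) : ℚ) = f D.det from rfl, h2]
    ring
  constructor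
  · have hcast : (((-1 : ℤ) ^ (n - 1) * 2 ^ (n - 2) * ((n : ℤ) - 1) : ℤ) : ℚ)
        = (-1 : ℚ) ^ (n - 1) * 2 ^ (n - 2) * ((n : ℚ) - 1) := by push_cast; ring
    exact_mod_cast hdetq.trans hcast.symm
  · -- cofactor sum
    obtain ⟨m, rfl⟩ : ∃ m, n = m + 1 := ⟨n - 1, by omega⟩
    have hm1 : (1 : ℚ) ≤ (m : ℚ) := by exact_mod_cast (by omega : 1 ≤ m)
    have hne : (D.map f).det ≠ 0 := by
      rw [← hdmap, show (f D.det : ℚ) = ((D.det : ℤ) : ℚ) from rfl, hdetq]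
      push_cast
      intro h
      rcases mul_eq_zero.mp h with h' | h'
      · rcases mul_eq_zero.mp h' with h'' | h''
        · exact pow_ne_zero _ (by norm_num : (-1 : ℚ) ≠ 0) h''
        · exact pow_ne_zero _ (by norm_num : (2 : ℚ) ≠ 0) h''
      · nlinarith
    have hJ : D.map f + Matrix.replicateCol (Fin 1) (1 : Fin (m + 1) → ℚ) * Matrix.replicateRow (Fin 1) (1 : Fin (m + 1) → ℚ) =
        Matrix.of fun i j => (G.dist i j : ℚ) + 1 := by
      ext i j
      simp [Matrix.map_apply, hD, hf, Matrix.mul_apply, Matrix.add_apply, Fin.sum_univ_one]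
    have hsum := adj_sum_eq (D.map f) (isUnit_iff_ne_zero.mpr hne)
    rw [hJ, sum_adjugate_eq_cofSum, cofSum_map f D, hkey 1, ← hdmap,
      show (f D.det : ℚ) = ((D.det : ℤ) : ℚ) from rfl, hdetq] at hsum
    have hfinal : (f (cofSum D) : ℚ) = ((-2 : ℚ)) ^ m := by
      rw [hsum]
      obtain ⟨p, rfl⟩ : ∃ p, m = p + 1 := ⟨m - 1, by omega⟩
      simp only [show p + 1 + 1 - 1 = p + 1 from by omega,
        show p + 1 + 1 - 2 = p from by omega]
      push_cast
      rw [show ((-2 : ℚ)) ^ (p + 1) = (-1) ^ (p + 1) * 2 ^ (p + 1) from by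
        rw [show (-2 : ℚ) = -1 * 2 from by norm_num, mul_pow]]
      ring
    have hcast2 : ((cofSum D : ℤ) : ℚ) = (((-2 : ℤ) ^ (m + 1 - 1) : ℤ) : ℚ) := by
      rw [show ((cofSum D : ℤ) : ℚ) = f (cofSum D) from rfl, hfinal]
      push_cast
      try rw [show m + 1 - 1 = m from by omega]
      try rfl
    exact_mod_cast hcast2
end

section
/- Let R be a commutative unital ring and T a tree on vertex set V = {1,…,n}, n ≥ 2, with edge set E, where each edge e ∈ E carries a weight a_e ∈ R. Let D ∈ R^{n×n} be the weighted distance matrix: D_{ii} = 0 and D_{ij} = Σ_{e ∈ P(i,j)} a_e, where P(i,j) is the set of edges on the unique path in T from i to j. Then det(D) = (−1)^{n−1}·2^{n−2}·(Π_{e ∈ E} a_e)·(Σ_{e ∈ E} a_e) and cof(D) = (−2)^{n−1}·Π_{e ∈ E} a_e. -/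
set_option linter.unusedSectionVars false
set_option maxHeartbeats 1000000

namespace GPaux

variable {R : Type*} [CommRing R]

open Matrix Finset SimpleGraph

/-! ### Matrix lemmas -/

def border {k : ℕ} (d : R) (r c : Fin k → R) (M : Matrix (Fin k) (Fin k) R) :
    Matrix (Fin (k+1)) (Fin (k+1)) R :=
  Matrix.of fun i j =>
    Fin.cases (Fin.cases d r j) (fun i' => Fin.cases (c i') (fun j' => M i' j') j) i

@[simp] lemma border_zero_zero {k : ℕ} (d : R) (r c : Fin k → R) (M : Matrix (Fin k) (Fin k) R) :
    border d r c M 0 0 = d := rfl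

@[simp] lemma border_zero_succ {k : ℕ} (d : R) (r c : Fin k → R) (M : Matrix (Fin k) (Fin k) R)
    (j : Fin k) : border d r c M 0 j.succ = r j := by
  simp [border]

@[simp] lemma border_succ_zero {k : ℕ} (d : R) (r c : Fin k → R) (M : Matrix (Fin k) (Fin k) R)
    (i : Fin k) : border d r c M i.succ 0 = c i := by
  simp [border]

@[simp] lemma border_succ_succ {k : ℕ} (d : R) (r c : Fin k → R) (M : Matrix (Fin k) (Fin k) R)
    (i j : Fin k) : border d r c M i.succ j.succ = M i j := by
  simp [border]

lemma det_border {m : ℕ} (d : R) (r c : Fin (m+1) → R) (M : Matrix (Fin (m+1)) (Fin (m+1)) R) :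
    (border d r c M).det = d * M.det
      + ∑ j : Fin (m+1), ∑ i : Fin (m+1),
          (-1 : R) ^ ((i:ℕ)+(j:ℕ)+1) * (c i * r j)
            * (M.submatrix i.succAbove j.succAbove).det := by
  rw [Matrix.det_succ_row_zero, Fin.sum_univ_succ]
  have h0 : (border d r c M).submatrix Fin.succ ((0 : Fin (m+2)).succAbove) = M := by
    ext i j
    simp [Fin.succAbove_zero]
  rw [h0]
  congr 1
  · simp
  · apply Finset.sum_congr rfl
    intro j _
    rw [Matrix.det_succ_column_zero]
    rw [Finset.mul_sum]
    apply Finset.sum_congr rfl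
    intro i _
    have hB : ((border d r c M).submatrix Fin.succ (j.succ).succAbove).submatrix
        i.succAbove Fin.succ = M.submatrix i.succAbove j.succAbove := by
      ext p q
      simp [Fin.succ_succAbove_succ]
    have hB0 : ((border d r c M).submatrix Fin.succ (j.succ).succAbove) i 0 = c i := by
      simp
    rw [hB, hB0, border_zero_succ, Fin.val_succ]
    ring

lemma det_conc {m : ℕ} (A : Matrix (Fin (m+1)) (Fin (m+1)) R) (i₀ : Fin (m+1)) (c : R)
    (h : ∀ j, A i₀ j = if j = i₀ then c else 0) :
    A.det = c * (A.submatrix i₀.succAbove i₀.succAbove).det := by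
  rw [Matrix.det_succ_row A i₀]
  rw [Finset.sum_eq_single i₀]
  · rw [h i₀]
    simp [Even.neg_one_pow ⟨(i₀ : ℕ), rfl⟩]
  · intro j _ hj
    rw [h j]
    simp [hj]
  · simp

lemma cofSum_eq_neg_det_border {m : ℕ} (A : Matrix (Fin (m+2)) (Fin (m+2)) R) :
    cofSum A = -(border 0 (fun _ => (1:R)) (fun _ => 1) A).det := by
  rw [det_border, zero_mul, zero_add]
  show (∑ i : Fin (m+2), ∑ j : Fin (m+2),
      (-1:R)^((i:ℕ)+(j:ℕ)) * (A.submatrix i.succAbove j.succAbove).det) = _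
  rw [← Finset.sum_neg_distrib, Finset.sum_comm]
  apply Finset.sum_congr rfl
  intro j _
  rw [← Finset.sum_neg_distrib]
  apply Finset.sum_congr rfl
  intro i _
  ring

lemma det_border_const {m : ℕ} (x d : R) (M : Matrix (Fin (m+2)) (Fin (m+2)) R) :
    (border d (fun _ => x) (fun _ => x) M).det = d * M.det - x^2 * cofSum M := by
  rw [det_border]
  have h : cofSum M = ∑ i : Fin (m+2), ∑ j : Fin (m+2),
      (-1:R)^((i:ℕ)+(j:ℕ)) * (M.submatrix i.succAbove j.succAbove).det := rfl
  rw [h, sub_eq_add_neg]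
  congr 1
  rw [Finset.mul_sum, ← Finset.sum_neg_distrib, Finset.sum_comm]
  apply Finset.sum_congr rfl
  intro j _
  rw [Finset.mul_sum, ← Finset.sum_neg_distrib]
  apply Finset.sum_congr rfl
  intro i _
  ring

/-! ### Graph lemmas -/

lemma exists_leaf {N : ℕ} (G : SimpleGraph (Fin (N+2))) [DecidableRel G.Adj] (hG : G.IsTree) :
    ∃ ℓ u, G.Adj ℓ u ∧ ∀ x, G.Adj ℓ x → x = u := by
  classical
  have hcard := hG.card_edgeFinset
  have hsum := G.sum_degrees_eq_twice_card_edges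
  have hex : ∃ v : Fin (N+2), G.degree v ≤ 1 := by
    by_contra h
    push_neg at h
    have h2 : 2 * (N+2) ≤ ∑ v : Fin (N+2), G.degree v := by
      calc 2 * (N+2) = ∑ _v : Fin (N+2), 2 := by simp [mul_comm]
        _ ≤ _ := Finset.sum_le_sum fun v _ => h v
    rw [hsum] at h2
    rw [Fintype.card_fin] at hcard
    omega
  obtain ⟨ℓ, hℓ⟩ := hex
  obtain ⟨y, hy⟩ := Fintype.exists_ne_of_one_lt_card (by simp) ℓ
  obtain ⟨p⟩ := hG.isConnected.preconnected ℓ y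
  obtain ⟨x, hx, -, -⟩ := SimpleGraph.Walk.exists_eq_cons_of_ne (Ne.symm hy) p
  have hmem : x ∈ G.neighborFinset ℓ := by rwa [SimpleGraph.mem_neighborFinset]
  have hcard1 : (G.neighborFinset ℓ).card = 1 := by
    have h1 := Finset.card_pos.mpr ⟨x, hmem⟩
    have h2 : #(G.neighborFinset ℓ) = G.degree ℓ := G.card_neighborFinset_eq_degree ℓ
    omega
  obtain ⟨u, hu⟩ := Finset.card_eq_one.mp hcard1
  refine ⟨ℓ, u, ?_, ?_⟩
  · rw [← SimpleGraph.mem_neighborFinset, hu]; simp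
  · intro z hz
    have : z ∈ G.neighborFinset ℓ := by rwa [SimpleGraph.mem_neighborFinset]
    rw [hu] at this; simpa using this

lemma support_avoid {V : Type*} [DecidableEq V] (G : SimpleGraph V) {ℓ u : V}
    (hleaf : ∀ x, G.Adj ℓ x → x = u) {a b : V} (p : G.Walk a b) (hp : p.IsPath)
    (ha : a ≠ ℓ) (hb : b ≠ ℓ) : ℓ ∉ p.support := by
  intro hmem
  have hspec := p.take_spec hmem
  have hqp : (p.takeUntil ℓ hmem).IsPath := hp.takeUntil hmem
  have hrp : (p.dropUntil ℓ hmem).IsPath := hp.dropUntil hmem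
  obtain ⟨x, hx, q', hq'⟩ :=
    SimpleGraph.Walk.exists_eq_cons_of_ne (fun h => ha h.symm) (p.takeUntil ℓ hmem).reverse
  have hxq : u ∈ (p.takeUntil ℓ hmem).support := by
    have : x ∈ (p.takeUntil ℓ hmem).reverse.support := by rw [hq']; simp
    rw [SimpleGraph.Walk.support_reverse, List.mem_reverse] at this
    rwa [hleaf x hx] at this
  obtain ⟨y, hy, r', hr'⟩ :=
    SimpleGraph.Walk.exists_eq_cons_of_ne (fun h => hb h.symm) (p.dropUntil ℓ hmem)
  have hyr : u ∈ (p.dropUntil ℓ hmem).support.tail := by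
    rw [hr']
    simpa using (hleaf y hy ▸ r'.start_mem_support)
  have hnd := hp.support_nodup
  rw [← hspec, SimpleGraph.Walk.support_append, List.nodup_append] at hnd
  exact hnd.2.2 u hxq u hyr rfl

lemma reachable_comap {n : ℕ} (G : SimpleGraph (Fin (n+1))) {ℓ : Fin (n+1)}
    {a b : Fin (n+1)} (p : G.Walk a b) (hsup : ∀ x ∈ p.support, x ≠ ℓ)
    {a' b' : Fin n} (ha : ℓ.succAbove a' = a) (hb : ℓ.succAbove b' = b) :
    (G.comap ℓ.succAbove).Reachable a' b' := by
  induction p generalizing a' b' with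
  | nil =>
    have : a' = b' := Fin.succAbove_right_injective (ha.trans hb.symm)
    exact this ▸ SimpleGraph.Reachable.refl _
  | @cons v c w h q ih =>
    obtain ⟨c', hc'⟩ := Fin.exists_succAbove_eq (hsup c (by simp))
    have hadj : (G.comap ℓ.succAbove).Adj a' c' := by
      simp only [SimpleGraph.comap_adj]
      rw [ha, hc']; exact h
    exact hadj.reachable.trans (ih (fun x hx => hsup x (by simp [hx])) hc' hb)

/-! ### The main induction -/

lemma aux (n : ℕ) : ∀ (G : SimpleGraph (Fin (n+2))) [inst : DecidableRel G.Adj],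
    G.IsTree → ∀ (w : Sym2 (Fin (n+2)) → R) (D : Matrix (Fin (n+2)) (Fin (n+2)) R),
    (∀ (i j : Fin (n+2)) (p : G.Walk i j), p.IsPath → D i j = (p.edges.map w).sum) →
    D.det = (-1 : R)^(n+1) * 2^n * (∏ e ∈ G.edgeFinset, w e) * (∑ e ∈ G.edgeFinset, w e)
    ∧ cofSum D = (-2 : R)^(n+1) * ∏ e ∈ G.edgeFinset, w e := by
  induction n with
  | zero =>
    intro G inst hG w D hD
    have h01 : G.Adj 0 1 := by
      obtain ⟨p⟩ := hG.isConnected.preconnected 0 1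
      obtain ⟨x, hx, -, -⟩ := SimpleGraph.Walk.exists_eq_cons_of_ne (by decide) p
      have hx0 : x ≠ 0 := fun h => (G.ne_of_adj hx) h.symm
      have hx1 : x = 1 := Fin.eq_one_of_ne_zero x hx0
      rwa [hx1] at hx
    have hedge : G.edgeFinset = {s((0:Fin 2),1)} := by
      ext e
      induction e using Sym2.ind with
      | _ x y =>
        simp only [SimpleGraph.mem_edgeFinset, SimpleGraph.mem_edgeSet, Finset.mem_singleton]
        constructor
        · intro h
          have hne := G.ne_of_adj h
          fin_cases x <;> fin_cases y <;> simp_all [Sym2.eq_swap]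
        · intro h
          rw [Sym2.eq_iff] at h
          rcases h with ⟨rfl, rfl⟩ | ⟨rfl, rfl⟩
          · exact h01
          · exact h01.symm
    have hD00 : D 0 0 = 0 := by simpa using hD 0 0 Walk.nil Walk.IsPath.nil
    have hD11 : D 1 1 = 0 := by simpa using hD 1 1 Walk.nil Walk.IsPath.nil
    have hD01 : D 0 1 = w s(0,1) := by
      simpa using hD 0 1 (SimpleGraph.Path.singleton h01).1 (SimpleGraph.Path.singleton h01).2
    have hD10 : D 1 0 = w s(0,1) := by
      have := hD 1 0 (SimpleGraph.Path.singleton h01.symm).1 (SimpleGraph.Path.singleton h01.symm).2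
      simpa [Sym2.eq_swap] using this
    constructor
    · rw [Matrix.det_fin_two, hD00, hD11, hD01, hD10, hedge]
      simp [mul_comm, mul_assoc, mul_left_comm]
      try ring
    · have hc : cofSum D = D 1 1 - D 0 1 - D 1 0 + D 0 0 := by
        show (∑ i : Fin 2, ∑ j : Fin 2,
          (-1:R)^((i:ℕ)+(j:ℕ)) * (D.submatrix i.succAbove j.succAbove).det) = _
        have e00 : ((0:Fin 2).succAbove (0:Fin 1)) = 1 := rfl
        have e10 : ((1:Fin 2).succAbove (0:Fin 1)) = 0 := rfl
        simp [Fin.sum_univ_two, Matrix.det_fin_one, Matrix.submatrix_apply, e00, e10]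
        ring
      rw [hc, hD00, hD11, hD01, hD10, hedge]
      simp
      try ring
  | succ n IH =>
    intro G inst hG w D hD
    obtain ⟨ℓ, u, hadj, hleaf⟩ := exists_leaf G hG
    have hlu : ℓ ≠ u := G.ne_of_adj hadj
    set f : Fin (n+2) → Fin (n+3) := ℓ.succAbove with hf
    have hfinj : Function.Injective f := Fin.succAbove_right_injective
    have hfne : ∀ k, f k ≠ ℓ := fun k => Fin.succAbove_ne ℓ k
    let G' : SimpleGraph (Fin (n+2)) := G.comap f
    haveI instG' : DecidableRel G'.Adj := fun a b => inst (f a) (f b)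
    -- G' is a tree
    have hG' : G'.IsTree := by
      constructor
      · constructor
        · intro a' b'
          obtain ⟨q⟩ := hG.isConnected.preconnected (f a') (f b')
          exact reachable_comap G q.toPath.1
            (fun x hx => by
              intro hxl
              exact (support_avoid G hleaf q.toPath.1 q.toPath.2 (hfne a') (hfne b'))
                (hxl ▸ hx))
            rfl rfl
      · intro v c hc
        have hinj : Function.Injective
            (SimpleGraph.Embedding.comap ⟨f, hfinj⟩ G : G.comap f →g G) := by
          intro x y hxy
          exact hfinj hxy
        exact hG.IsAcyclic _ (hc.map hinj)
    -- edge decomposition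
    have hnotmem : s(ℓ,u) ∉ G'.edgeFinset.image (Sym2.map f) := by
      simp only [Finset.mem_image]
      rintro ⟨e', -, heq⟩
      induction e' using Sym2.ind with
      | _ x y =>
        rw [Sym2.map_pair_eq, Sym2.eq_iff] at heq
        rcases heq with ⟨h1, -⟩ | ⟨-, h2⟩
        · exact hfne x h1
        · exact hfne y h2
    have hEdecomp : G.edgeFinset = insert s(ℓ,u) (G'.edgeFinset.image (Sym2.map f)) := by
      ext e
      induction e using Sym2.ind with
      | _ x y =>
        simp only [SimpleGraph.mem_edgeFinset, SimpleGraph.mem_edgeSet, Finset.mem_insert,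
          Finset.mem_image]
        constructor
        · intro h
          by_cases hx : x = ℓ
          · subst hx
            left; rw [hleaf y h]
          · by_cases hy : y = ℓ
            · subst hy
              left; rw [hleaf x h.symm, Sym2.eq_swap]
            · right
              obtain ⟨x', hx'⟩ := Fin.exists_succAbove_eq hx
              obtain ⟨y', hy'⟩ := Fin.exists_succAbove_eq hy
              rw [← hf] at hx' hy'
              refine ⟨s(x',y'), ?_, ?_⟩
              · simp only [SimpleGraph.mem_edgeFinset, SimpleGraph.mem_edgeSet]
                show G.Adj (f x') (f y')
                rw [hx', hy']; exact h
              · rw [Sym2.map_pair_eq, hx', hy']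
        · rintro (h | ⟨e', he', heq⟩)
          · rw [← SimpleGraph.mem_edgeSet, h, SimpleGraph.mem_edgeSet]; exact hadj
          · rw [← SimpleGraph.mem_edgeSet, ← heq]
            induction e' using Sym2.ind with
            | _ x' y' =>
              rw [Sym2.map_pair_eq, SimpleGraph.mem_edgeSet]
              have hadj' : G'.Adj x' y' := by
                rw [SimpleGraph.mem_edgeSet] at he'
                exact he'
              exact hadj'
    set a : R := w s(ℓ,u) with ha
    set w' : Sym2 (Fin (n+2)) → R := fun e => w (Sym2.map f e) with hw'
    have hProd : ∏ e ∈ G.edgeFinset, w e = a * ∏ e ∈ G'.edgeFinset, w' e := by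
      rw [hEdecomp, Finset.prod_insert hnotmem,
        Finset.prod_image (fun x _ y _ h => Sym2.map.injective hfinj h)]
    have hSum : ∑ e ∈ G.edgeFinset, w e = a + ∑ e ∈ G'.edgeFinset, w' e := by
      rw [hEdecomp, Finset.sum_insert hnotmem,
        Finset.sum_image (fun x _ y _ h => Sym2.map.injective hfinj h)]
    -- the smaller distance matrix
    set M : Matrix (Fin (n+2)) (Fin (n+2)) R := D.submatrix f f with hM
    have hD' : ∀ (i j : Fin (n+2)) (p : G'.Walk i j), p.IsPath →
        M i j = (p.edges.map w').sum := by
      intro i j p hp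
      let emb : G' ↪g G := SimpleGraph.Embedding.comap ⟨f, hfinj⟩ G
      have hembinj : Function.Injective (emb : G' →g G) := fun x y hxy => hfinj hxy
      have hq : (p.map emb.toHom).IsPath := SimpleGraph.Walk.map_isPath_of_injective hembinj hp
      have h1 := hD (f i) (f j) (p.map emb.toHom) hq
      erw [SimpleGraph.Walk.edges_map] at h1
      rw [hM]
      show D (f i) (f j) = _
      rw [h1, List.map_map]
      rfl
    obtain ⟨hMdet, hMcof⟩ := IH G' hG' w' M hD'
    -- distance identities
    have hD0 : ∀ i, D i i = 0 := fun i => by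
      simpa using hD i i Walk.nil Walk.IsPath.nil
    have hDlu : D ℓ u = a := by
      simpa using hD ℓ u (SimpleGraph.Path.singleton hadj).1 (SimpleGraph.Path.singleton hadj).2
    have hDul : D u ℓ = a := by
      have := hD u ℓ (SimpleGraph.Path.singleton hadj.symm).1
        (SimpleGraph.Path.singleton hadj.symm).2
      simpa [Sym2.eq_swap] using this
    have hrow : ∀ x, x ≠ ℓ → D ℓ x = a + D u x := by
      intro x hx
      obtain ⟨q0⟩ := hG.isConnected.preconnected ℓ x
      obtain ⟨y, hy, t, ht⟩ := SimpleGraph.Walk.exists_eq_cons_of_ne (Ne.symm hx) q0.toPath.1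
      have hyu : y = u := hleaf y hy
      subst hyu
      have htp : t.IsPath := by
        have h2 := q0.toPath.2
        rw [ht] at h2
        exact h2.of_cons
      have h1 := hD ℓ x q0.toPath.1 q0.toPath.2
      rw [ht] at h1
      simp only [SimpleGraph.Walk.edges_cons, List.map_cons, List.sum_cons] at h1
      rw [h1, ← hD _ x t htp, ha]
    have hsymm : ∀ i j, D i j = D j i := by
      intro i j
      obtain ⟨q0⟩ := hG.isConnected.preconnected i j
      have h1 := hD i j q0.toPath.1 q0.toPath.2
      have h2 := hD j i q0.toPath.1.reverse q0.toPath.2.reverse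
      rw [SimpleGraph.Walk.edges_reverse, List.map_reverse, List.sum_reverse] at h2
      rw [h1, h2]
    have hcol : ∀ x, x ≠ ℓ → D x ℓ = D x u + a := by
      intro x hx
      rw [hsymm x ℓ, hrow x hx, hsymm u x, add_comm]
    -- determinant computation
    set D1 := D.updateRow ℓ (D ℓ + (-1 : R) • D u) with hD1
    set D2 := D1.updateCol ℓ (fun k => D1 k ℓ + (-1 : R) • D1 k u) with hD2def
    have hdet2 : D2.det = D.det := by
      rw [hD2def, Matrix.det_updateCol_add_smul_self D1 hlu,
        hD1, Matrix.det_updateRow_add_smul_self D hlu]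
    set σ : Fin (n+3) ≃ Fin (n+3) := (finSuccEquiv (n+2)).trans (finSuccEquiv' ℓ).symm with hσ
    have hσ0 : σ 0 = ℓ := by simp [hσ]
    have hσs : ∀ k, σ k.succ = f k := by
      intro k; simp [hσ, hf]
    have hD2entry : D2.submatrix σ σ = border (-(2*a)) (fun _ => a) (fun _ => a) M := by
      ext i j
      rw [Matrix.submatrix_apply]
      induction i using Fin.cases with
      | zero =>
        induction j using Fin.cases with
        | zero =>
          rw [hσ0, border_zero_zero]
          rw [hD2def]
          rw [Matrix.updateCol_self]
          rw [hD1]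
          simp only [Matrix.updateRow_self, Matrix.updateRow_ne hlu.symm, Pi.add_apply,
            Pi.smul_apply, smul_eq_mul]
          rw [hD0 ℓ, hD0 u, hDul, hDlu]
          ring
        | succ j' =>
          rw [hσ0, hσs, border_zero_succ]
          rw [hD2def, Matrix.updateCol_ne (hfne j'), hD1, Matrix.updateRow_self]
          simp only [Pi.add_apply, Pi.smul_apply, smul_eq_mul]
          rw [hrow (f j') (hfne j')]
          ring
      | succ i' =>
        induction j using Fin.cases with
        | zero =>
          rw [hσs, hσ0, border_succ_zero]
          rw [hD2def, Matrix.updateCol_self, hD1]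
          rw [Matrix.updateRow_ne (hfne i')]
          simp only [Pi.add_apply, Pi.smul_apply, smul_eq_mul]
          rw [hcol (f i') (hfne i')]
          ring
        | succ j' =>
          rw [hσs, hσs, border_succ_succ]
          rw [hD2def, Matrix.updateCol_ne (hfne j'), hD1, Matrix.updateRow_ne (hfne i')]
          rfl
      done
    have hdetD : D.det = -(2*a) * M.det - a^2 * cofSum M := by
      rw [← hdet2, ← Matrix.det_submatrix_equiv_self σ D2, hD2entry, det_border_const]
    -- cofactor sum computation
    set ℓ' : Fin (n+4) := ℓ.succ with hℓ'
    set u' : Fin (n+4) := u.succ with hu'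
    have hℓ'u' : ℓ' ≠ u' := fun h => hlu (Fin.succ_injective _ h)
    have hℓ'0 : ℓ' ≠ 0 := Fin.succ_ne_zero ℓ
    set B := border 0 (fun _ => (1:R)) (fun _ => 1) D with hB
    set B1 := B.updateRow ℓ' (B ℓ' + (-1 : R) • B u') with hB1
    set B2 := B1.updateCol ℓ' (fun k => B1 k ℓ' + (-1 : R) • B1 k u') with hB2
    set B3 := B2.updateRow ℓ' (B2 ℓ' + (-a) • B2 0) with hB3
    set B4 := B3.updateCol ℓ' (fun k => B3 k ℓ' + (-a) • B3 k 0) with hB4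
    have hdetB : B4.det = B.det := by
      rw [hB4, Matrix.det_updateCol_add_smul_self B3 hℓ'0,
        hB3, Matrix.det_updateRow_add_smul_self B2 hℓ'0,
        hB2, Matrix.det_updateCol_add_smul_self B1 hℓ'u',
        hB1, Matrix.det_updateRow_add_smul_self B hℓ'u']
    have hconc : ∀ j, B4 ℓ' j = if j = ℓ' then -(2*a) else 0 := by
      intro j
      by_cases hj : j = ℓ'
      · subst hj
        rw [if_pos rfl]
        rw [hB4, Matrix.updateCol_self]
        have h30 : B3 ℓ' 0 = 0 := by
          rw [hB3, Matrix.updateRow_self]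
          simp only [Pi.add_apply, Pi.smul_apply, smul_eq_mul]
          rw [hB2, Matrix.updateCol_ne hℓ'0.symm, Matrix.updateCol_ne hℓ'0.symm]
          rw [hB1, Matrix.updateRow_self, Matrix.updateRow_ne hℓ'0.symm]
          simp only [Pi.add_apply, Pi.smul_apply, smul_eq_mul]
          rw [hB, hℓ', hu']
          simp
        have h3ℓ : B3 ℓ' ℓ' = -(2*a) := by
          rw [hB3, Matrix.updateRow_self]
          simp only [Pi.add_apply, Pi.smul_apply, smul_eq_mul]
          have h2ℓℓ : B2 ℓ' ℓ' = -(2*a) := by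
            rw [hB2, Matrix.updateCol_self]
            simp only [Pi.add_apply, Pi.smul_apply, smul_eq_mul]
            rw [hB1, Matrix.updateRow_self]
            simp only [Pi.add_apply, Pi.smul_apply, smul_eq_mul]
            rw [hB, hℓ', hu']
            simp only [border_succ_succ]
            rw [hD0 ℓ, hD0 u, hDul, hDlu]
            ring
          have h20ℓ : B2 0 ℓ' = 0 := by
            rw [hB2, Matrix.updateCol_self]
            simp only [Pi.add_apply, Pi.smul_apply, smul_eq_mul]
            rw [hB1, Matrix.updateRow_ne hℓ'0.symm]
            rw [hB, hℓ', hu']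
            simp
          rw [h2ℓℓ, h20ℓ]
          ring
        simp only [Pi.add_apply, Pi.smul_apply, smul_eq_mul]
        rw [h3ℓ, h30]
        ring
      · rw [if_neg hj]
        rw [hB4, Matrix.updateCol_ne hj]
        rw [hB3, Matrix.updateRow_self]
        simp only [Pi.add_apply, Pi.smul_apply, smul_eq_mul]
        rw [hB2, Matrix.updateCol_ne hj, Matrix.updateCol_ne hj]
        rw [hB1, Matrix.updateRow_self, Matrix.updateRow_ne hℓ'0.symm]
        simp only [Pi.add_apply, Pi.smul_apply, smul_eq_mul]
        induction j using Fin.cases with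
        | zero =>
          rw [hB, hℓ', hu']
          simp
        | succ x =>
          have hxl : x ≠ ℓ := by
            intro h
            exact hj (by rw [h, hℓ'])
          rw [hB, hℓ', hu']
          simp only [border_succ_succ, border_zero_succ]
          rw [hrow x hxl]
          ring
    have hsubB : B4.submatrix ℓ'.succAbove ℓ'.succAbove
        = border 0 (fun _ => (1:R)) (fun _ => 1) M := by
      have hB4B : ∀ (x y : Fin (n+4)), x ≠ ℓ' → y ≠ ℓ' → B4 x y = B x y := by
        intro x y hx hy
        rw [hB4, Matrix.updateCol_ne hy, hB3, Matrix.updateRow_ne hx,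
          hB2, Matrix.updateCol_ne hy, hB1, Matrix.updateRow_ne hx]
      ext i j
      rw [Matrix.submatrix_apply,
        hB4B _ _ (Fin.succAbove_ne ℓ' i) (Fin.succAbove_ne ℓ' j)]
      induction i using Fin.cases with
      | zero =>
        induction j using Fin.cases with
        | zero =>
          rw [hℓ', Fin.succ_succAbove_zero]
          simp [hB]
        | succ j' =>
          rw [hℓ', Fin.succ_succAbove_zero, Fin.succ_succAbove_succ]
          simp [hB]
      | succ i' =>
        induction j using Fin.cases with
        | zero =>
          rw [hℓ', Fin.succ_succAbove_zero, Fin.succ_succAbove_succ]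
          simp [hB]
        | succ j' =>
          rw [hℓ', Fin.succ_succAbove_succ, Fin.succ_succAbove_succ]
          simp [hB, hM, hf]
    have hcofD : cofSum D = -(2*a) * cofSum M := by
      have hmb : (border 0 (fun _ => (1:R)) (fun _ => 1) M).det = -cofSum M := by
        rw [cofSum_eq_neg_det_border M]; ring
      rw [cofSum_eq_neg_det_border D, ← hB, ← hdetB,
        det_conc B4 ℓ' (-(2*a)) hconc, hsubB, hmb]
      ring
    -- assemble
    have hneg2 : ∀ m : ℕ, (-2 : R)^m = (-1)^m * 2^m := by
      intro m
      rw [← neg_one_mul, mul_pow]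
    constructor
    · rw [hdetD, hMdet, hMcof, hProd, hSum, hneg2]
      ring
    · rw [hcofD, hMcof, hProd, hneg2, hneg2]
      ring

end GPaux

/-- Weighted Graham–Pollak theorem (Bapat–Kirkland–Neumann) and its cofactor-sum
companion: for a tree `T` on `n ≥ 2` vertices with edge weights `w e ∈ R` and
weighted distance matrix `D` (so `D i j` is the sum of the weights of the edges
on the unique path from `i` to `j`), one has
`det D = (−1)^(n−1)·2^(n−2)·(Π_{e ∈ E} w e)·(Σ_{e ∈ E} w e)` and
`cof D = (−2)^(n−1)·Π_{e ∈ E} w e`. -/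
theorem stmt_11 {R : Type*} [CommRing R] {n : ℕ} (hn : 2 ≤ n)
    (G : SimpleGraph (Fin n)) [DecidableRel G.Adj] (hG : G.IsTree)
    (w : Sym2 (Fin n) → R)
    (D : Matrix (Fin n) (Fin n) R)
    (hD : ∀ (i j : Fin n) (p : G.Walk i j), p.IsPath → D i j = (p.edges.map w).sum) :
    D.det = (-1 : R) ^ (n - 1) * 2 ^ (n - 2)
        * (∏ e ∈ G.edgeFinset, w e) * (∑ e ∈ G.edgeFinset, w e)
    ∧ cofSum D = (-2 : R) ^ (n - 1) * ∏ e ∈ G.edgeFinset, w e := by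
  obtain ⟨k, rfl⟩ : ∃ k, n = k + 2 := ⟨n - 2, by omega⟩
  have h1 : k + 2 - 1 = k + 1 := rfl
  have h2 : k + 2 - 2 = k := rfl
  rw [h1, h2]
  exact GPaux.aux k G hG w D hD
end

section
/- Let R be a commutative unital ring and T a tree on vertex set V = {1,…,n} with edge set E, where each edge {i,j} carries an additive weight a_{ij} = a_{ji} ∈ R and two directed multiplicative weights m_{i→j}, m_{j→i} ∈ R. Let D_T ∈ R^{n×n} be the distance matrix: (D_T)_{ii} = 0 and, for the unique path i = i_0, i_1, …, i_k = j from i to j, (D_T)_{ij} = Σ_{l=0}^{k−1} a_{i_l i_{l+1}}(m_{i_l → i_{l+1}} − 1)·Π_{u=0}^{l−1} m_{i_u → i_{u+1}}. Let x ∈ R, J the all-ones matrix, and let I, J' ⊆ V satisfy: |I| = |J'| ≤ n−3; I ∪ J' ≠ V; the induced subgraphs of T on V∖I, on V∖J', and on V∖(I∩J') are connected; and |I Δ J'| > 2. Then det((D_T + xJ)_{I|J'}) = 0, where (D_T + xJ)_{I|J'} is the submatrix obtained by deleting the rows indexed by I and the columns indexed by J'. -/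
open Matrix


/-- The square submatrix of `M` obtained by deleting the rows indexed by `I` and the
columns indexed by `J'`, the remaining rows and columns kept in increasing order. -/
def delSub {R : Type*} [CommRing R] {n k : ℕ} (M : Matrix (Fin n) (Fin n) R)
    (I J' : Finset (Fin n)) (hI : Iᶜ.card = k) (hJ : J'ᶜ.card = k) :
    Matrix (Fin k) (Fin k) R :=
  M.submatrix (fun r => ((Iᶜ.orderIsoOfFin hI) r : Fin n))
    (fun c => ((J'ᶜ.orderIsoOfFin hJ) c : Fin n))

/-- The weighted length of a walk, for additive weights `a` and multiplicative weights
`m` on directed edges: along `i = i₀ → i₁ → ⋯ → i_k = j` it is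
`Σ_{l} a_{i_l i_{l+1}} (m_{i_l → i_{l+1}} − 1) Π_{u < l} m_{i_u → i_{u+1}}`. -/
def wWt {R : Type*} [CommRing R] {n : ℕ} {G : SimpleGraph (Fin n)}
    (a m : Fin n → Fin n → R) {i j : Fin n} (p : G.Walk i j) : R :=
  p.darts.foldr
    (fun d acc => a d.toProd.1 d.toProd.2 * (m d.toProd.1 d.toProd.2 - 1)
      + m d.toProd.1 d.toProd.2 * acc) 0

/-- Multiplicative weight of a walk: product of `m` over its darts. -/
def mWt {R : Type*} [CommRing R] {n : ℕ} {G : SimpleGraph (Fin n)}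
    (m : Fin n → Fin n → R) {i j : Fin n} (p : G.Walk i j) : R :=
  (p.darts.map fun d => m d.toProd.1 d.toProd.2).prod

private lemma foldr_step_eq {R : Type*} [CommRing R] {D : Type*} (A M : D → R) (z : R) :
    ∀ l : List D, l.foldr (fun d acc => A d + M d * acc) z
      = l.foldr (fun d acc => A d + M d * acc) 0 + (l.map M).prod * z
  | [] => by simp
  | d :: l => by
      simp only [List.foldr_cons, List.map_cons, List.prod_cons,
        foldr_step_eq A M z l]
      ring

lemma wWt_append {R : Type*} [CommRing R] {n : ℕ} {G : SimpleGraph (Fin n)}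
    (a m : Fin n → Fin n → R) {i j l : Fin n} (p : G.Walk i j) (q : G.Walk j l) :
    wWt a m (p.append q) = wWt a m p + mWt m p * wWt a m q := by
  unfold wWt mWt
  rw [SimpleGraph.Walk.darts_append, List.foldr_append]
  exact foldr_step_eq _ _ _ _

/-- Determinant of a product through a small type is zero. -/
lemma det_mul_eq_zero_of_card_lt {R : Type*} [CommRing R] {k : ℕ} {m : Type*}
    [Fintype m] [DecidableEq m] (hcard : Fintype.card m < k)
    (A : Matrix (Fin k) m R) (B : Matrix m (Fin k) R) :
    (A * B).det = 0 := by
  have hle : Fintype.card m ≤ Fintype.card (Fin k) := by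
    rw [Fintype.card_fin]; omega
  obtain ⟨e⟩ := Function.Embedding.nonempty_of_card_le hle
  set P : Matrix m (Fin k) R := Matrix.of fun s j => if e s = j then 1 else 0 with hP
  have hPPt : P * Pᵀ = (1 : Matrix m m R) := by
    ext s s'
    rw [Matrix.mul_apply]
    rw [Finset.sum_eq_single (e s)]
    · simp [hP, Matrix.transpose_apply, Matrix.one_apply, e.injective.eq_iff, eq_comm]
    · intro j _ hj
      simp [hP, Ne.symm hj]
    · intro h; exact absurd (Finset.mem_univ _) h
  have hfact : A * B = (A * P) * (Pᵀ * B) := by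
    rw [Matrix.mul_assoc, ← Matrix.mul_assoc P, hPPt, Matrix.one_mul]
  rw [hfact, Matrix.det_mul]
  have hns : ¬ Function.Surjective e := by
    intro hs
    have := Fintype.card_le_of_surjective e hs
    rw [Fintype.card_fin] at this
    omega
  rw [Function.Surjective] at hns
  push_neg at hns
  obtain ⟨j0, hj0⟩ := hns
  have hcol : ∀ i, (A * P) i j0 = 0 := by
    intro i
    rw [Matrix.mul_apply]
    apply Finset.sum_eq_zero
    intro s _
    simp [hP, hj0 s]
  rw [Matrix.det_eq_zero_of_column_eq_zero j0 hcol, zero_mul]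

/-- In a connected induced subgraph there is a path between any two vertices of the
set whose support stays in the set. -/
lemma exists_path_in_set {n : ℕ} {G : SimpleGraph (Fin n)} {s : Finset (Fin n)}
    (hconn : (G.induce (↑s : Set (Fin n))).Connected) {v w : Fin n}
    (hv : v ∈ s) (hw : w ∈ s) :
    ∃ p : G.Walk v w, p.IsPath ∧ ∀ u ∈ p.support, u ∈ s := by
  classical
  obtain ⟨q⟩ := hconn.preconnected ⟨v, by simpa⟩ ⟨w, by simpa⟩
  let q' := q.toPath
  let emb := SimpleGraph.Embedding.induce (↑s : Set (Fin n)) (G := G)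
  have hinj : Function.Injective emb.toHom := emb.injective
  refine ⟨(q'.1.map emb.toHom).copy rfl rfl, ?_, ?_⟩
  · change (q'.1.map emb.toHom).IsPath
    exact SimpleGraph.Walk.map_isPath_of_injective hinj q'.2
  · intro u hu
    change u ∈ (q'.1.map emb.toHom).support at hu
    rw [SimpleGraph.Walk.support_map] at hu
    obtain ⟨z, _, rfl⟩ := List.mem_map.mp hu
    exact Finset.mem_coe.mp z.2

/-- First vertex on a walk satisfying `P` (given the endpoint satisfies `P`),
with the walk split there. -/
lemma walk_first_exit {n : ℕ} {G : SimpleGraph (Fin n)} (P : Fin n → Prop)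
    [DecidablePred P] {v w : Fin n} (p : G.Walk v w) (hw : P w) :
    ∃ (g : Fin n) (q : G.Walk v g) (r : G.Walk g w), P g ∧
      (∀ u ∈ q.support, u ≠ g → ¬ P u) ∧ p = q.append r := by
  induction p with
  | nil =>
    refine ⟨_, .nil, .nil, hw, ?_, rfl⟩
    intro u hu hne
    simp only [SimpleGraph.Walk.support_nil, List.mem_singleton] at hu
    exact absurd hu hne
  | @cons v v' w h p ih =>
    by_cases hv : P v
    · refine ⟨v, .nil, .cons h p, hv, ?_, rfl⟩
      intro u hu hne
      simp only [SimpleGraph.Walk.support_nil, List.mem_singleton] at hu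
      exact absurd hu hne
    · obtain ⟨g, q, r, hg, hq, rfl⟩ := ih hw
      refine ⟨g, .cons h q, r, hg, ?_, rfl⟩
      intro u hu hne
      rw [SimpleGraph.Walk.support_cons] at hu
      rcases List.mem_cons.mp hu with rfl | hu'
      · exact hv
      · exact hq u hu' hne

/-- Appending two paths that meet only at the common endpoint yields a path. -/
lemma isPath_append_of_meet {n : ℕ} {G : SimpleGraph (Fin n)} {u v w : Fin n}
    {p : G.Walk u v} {q : G.Walk v w} (hp : p.IsPath) (hq : q.IsPath)
    (hd : ∀ z ∈ p.support, z ∈ q.support → z = v) :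
    (p.append q).IsPath := by
  have hqn := hq.support_nodup
  rw [q.support_eq_cons] at hqn
  obtain ⟨hvtail, htail⟩ := List.nodup_cons.mp hqn
  rw [SimpleGraph.Walk.isPath_def, SimpleGraph.Walk.support_append]
  refine List.Nodup.append hp.support_nodup htail ?_
  intro z hz1 hz2
  have hz2' : z ∈ q.support := by
    rw [q.support_eq_cons]; exact List.mem_cons_of_mem _ hz2
  have hzv : z = v := hd z hz1 hz2'
  subst hzv
  exact hvtail hz2

/-- Theorem (general distance matrix of a tree, case `|I Δ J'| > 2`).
`T` is a tree on `{1,…,n}` whose edge `{i,j}` carries an additive weight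
`a i j = a j i` and directed multiplicative weights `m i j`, `m j i`; `D` is the
associated distance matrix. Assume `|I| = |J'| ≤ n − 3`, `I ∪ J' ≠ V`, the trees
induced on `V∖I`, `V∖J'`, `V∖(I∩J')` are connected, and `|I Δ J'| > 2`. Then
`det((D + xJ)_{I|J'}) = 0`. -/
theorem stmt_15 {R : Type*} [CommRing R] {n k : ℕ}
    (G : SimpleGraph (Fin n)) [DecidableRel G.Adj] (hG : G.IsTree)
    (a m : Fin n → Fin n → R)
    (ha : ∀ i j : Fin n, G.Adj i j → a i j = a j i)
    (D : Matrix (Fin n) (Fin n) R)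
    (hD : ∀ (i j : Fin n) (p : G.Walk i j), p.IsPath → D i j = wWt a m p)
    (x : R) (I J' : Finset (Fin n))
    (hcard : I.card = J'.card) (hle : I.card ≤ n - 3)
    (hunion : I ∪ J' ≠ Finset.univ)
    (hconnI : (G.induce (↑(Iᶜ) : Set (Fin n))).Connected)
    (hconnJ : (G.induce (↑(J'ᶜ) : Set (Fin n))).Connected)
    (hconnIJ : (G.induce (↑((I ∩ J')ᶜ) : Set (Fin n))).Connected)
    (hsym : 2 < (symmDiff I J').card)
    (hI : Iᶜ.card = k) (hJ : J'ᶜ.card = k) :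
    (delSub (D + x • Matrix.of fun _ _ => (1 : R)) I J' hI hJ).det = 0 := by
  classical
  -- a vertex outside I ∪ J'
  have hex : ∃ w₀ : Fin n, w₀ ∉ I ∪ J' := by
    by_contra hc
    push_neg at hc
    exact hunion (Finset.eq_univ_iff_forall.mpr hc)
  obtain ⟨w₀, hw₀⟩ := hex
  have hw₀I : w₀ ∉ I := fun h => hw₀ (Finset.mem_union_left _ h)
  have hw₀J : w₀ ∉ J' := fun h => hw₀ (Finset.mem_union_right _ h)
  -- key gateway lemma
  have key : ∀ v : Fin n, ∃ (gv : Fin n) (c M : R), v ∈ J' \ I →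
      (gv ∈ (I ∪ J')ᶜ ∧ ∀ w ∈ J'ᶜ, D v w + x = c + M * (D gv w + x)) := by
    intro v
    by_cases hv : v ∈ J' \ I
    · obtain ⟨hvJ, hvI⟩ := Finset.mem_sdiff.mp hv
      -- path from v to w₀ inside Iᶜ
      obtain ⟨p, hp, hpsup⟩ := exists_path_in_set hconnI
        (Finset.mem_compl.mpr hvI) (Finset.mem_compl.mpr hw₀I)
      obtain ⟨g, q, r, hg, hq, hpeq⟩ :=
        walk_first_exit (fun u => u ∈ J'ᶜ) p (Finset.mem_compl.mpr hw₀J)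
      have hqpath : q.IsPath := by
        rw [hpeq] at hp
        exact hp.of_append_left
      have hgsup : g ∈ p.support := by
        rw [hpeq]
        exact SimpleGraph.Walk.subset_support_append_left q r
          q.end_mem_support
      have hgI : g ∉ I := Finset.mem_compl.mp (hpsup g hgsup)
      have hgJ : g ∉ J' := Finset.mem_compl.mp hg
      have hgU : g ∈ (I ∪ J')ᶜ := by
        rw [Finset.mem_compl, Finset.mem_union]
        tauto
      refine ⟨g, wWt a m q + x - mWt m q * x, mWt m q, fun _ => ⟨hgU, ?_⟩⟩
      intro w hw
      obtain ⟨p₂, hp₂, hp₂sup⟩ := exists_path_in_set hconnJ hg hw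
      have hpath : (q.append p₂).IsPath := by
        refine isPath_append_of_meet hqpath hp₂ ?_
        intro z hz1 hz2
        by_contra hne
        exact hq z hz1 hne (hp₂sup z hz2)
      rw [hD v w (q.append p₂) hpath, hD g w p₂ hp₂, wWt_append]
      ring
    · exact ⟨v, 0, 0, fun h => absurd h hv⟩
  choose gv cv Mv hkey using key
  -- cardinal arithmetic
  set U : Finset (Fin n) := (I ∪ J')ᶜ with hU
  have hsd : (I \ J').card = (J' \ I).card := Finset.card_sdiff_comm hcard
  have hsymm : (symmDiff I J').card = (I \ J').card + (J' \ I).card := by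
    rw [symmDiff_def, Finset.sup_eq_union]
    exact Finset.card_union_of_disjoint disjoint_sdiff_sdiff
  have hs2 : 2 ≤ (J' \ I).card := by omega
  have hcardU : (J' \ I).card + I.card = (I ∪ J').card := by
    rw [Finset.union_comm]
    exact Finset.card_sdiff_add_card J' I
  have hUcard : U.card = n - (I ∪ J').card := by
    rw [hU, Finset.card_compl, Fintype.card_fin]
  have hkcard : k = n - I.card := by
    rw [← hI, Finset.card_compl, Fintype.card_fin]
  have hIJle : (I ∪ J').card ≤ n := by
    have := Finset.card_le_univ (I ∪ J')
    rwa [Fintype.card_fin] at this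
  -- the factorization
  set A : Matrix (Fin k) ({u // u ∈ U} ⊕ Unit) R := Matrix.of fun r s =>
    if ((Iᶜ.orderIsoOfFin hI) r : Fin n) ∈ J' then
      (match s with
       | Sum.inl u => if (u : Fin n) = gv ((Iᶜ.orderIsoOfFin hI) r : Fin n)
           then Mv ((Iᶜ.orderIsoOfFin hI) r : Fin n) else 0
       | Sum.inr _ => cv ((Iᶜ.orderIsoOfFin hI) r : Fin n))
    else
      (match s with
       | Sum.inl u => if (u : Fin n) = ((Iᶜ.orderIsoOfFin hI) r : Fin n) then 1 else 0
       | Sum.inr _ => 0) with hA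
  set B : Matrix ({u // u ∈ U} ⊕ Unit) (Fin k) R := Matrix.of fun s c =>
    match s with
    | Sum.inl u => D (u : Fin n) ((J'ᶜ.orderIsoOfFin hJ) c : Fin n) + x
    | Sum.inr _ => 1 with hB
  have hAB : delSub (D + x • Matrix.of fun _ _ => (1 : R)) I J' hI hJ = A * B := by
    ext r c
    set v : Fin n := ((Iᶜ.orderIsoOfFin hI) r : Fin n) with hv
    set w : Fin n := ((J'ᶜ.orderIsoOfFin hJ) c : Fin n) with hw
    have hv2 : (Iᶜ.orderEmbOfFin hI) r = v := by
      rw [hv, Finset.coe_orderIsoOfFin_apply]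
    have hw2 : (J'ᶜ.orderEmbOfFin hJ) c = w := by
      rw [hw, Finset.coe_orderIsoOfFin_apply]
    have hvI : v ∉ I := Finset.mem_compl.mp ((Iᶜ.orderIsoOfFin hI) r).2
    have hwJ : w ∈ J'ᶜ := ((J'ᶜ.orderIsoOfFin hJ) c).2
    have hlhs : delSub (D + x • Matrix.of fun _ _ => (1 : R)) I J' hI hJ r c
        = D v w + x := by
      simp [delSub, Matrix.submatrix_apply, Matrix.add_apply, Matrix.smul_apply,
        smul_eq_mul, hv2, hw2]
    rw [hlhs, Matrix.mul_apply, Fintype.sum_sum_type]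
    by_cases hvJ : v ∈ J'
    · obtain ⟨hgU, hrel⟩ := hkey v (Finset.mem_sdiff.mpr ⟨hvJ, hvI⟩)
      have hsum : (∑ u : {u // u ∈ U}, A r (Sum.inl u) * B (Sum.inl u) c)
          = Mv v * (D (gv v) w + x) := by
        rw [Fintype.sum_eq_single (⟨gv v, hgU⟩ : {u // u ∈ U})]
        · simp [hA, hB, hvJ, hv2, hw2]
        · intro u hu
          have : (u : Fin n) ≠ gv v := fun h => hu (Subtype.ext h)
          simp [hA, hB, hvJ, hv2, this]
      rw [hsum]
      have : (∑ _u : Unit, A r (Sum.inr _u) * B (Sum.inr _u) c) = cv v := by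
        simp [hA, hB, hvJ, hv2]
      rw [this, hrel w hwJ]
      ring
    · have hvU : v ∈ U := by
        rw [hU, Finset.mem_compl, Finset.mem_union]
        tauto
      have hsum : (∑ u : {u // u ∈ U}, A r (Sum.inl u) * B (Sum.inl u) c)
          = D v w + x := by
        rw [Fintype.sum_eq_single (⟨v, hvU⟩ : {u // u ∈ U})]
        · simp [hA, hB, hvJ, hv2, hw2]
        · intro u hu
          have : (u : Fin n) ≠ v := fun h => hu (Subtype.ext h)
          simp [hA, hB, hvJ, hv2, this]
      rw [hsum]
      have : (∑ _u : Unit, A r (Sum.inr _u) * B (Sum.inr _u) c) = 0 := by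
        simp [hA, hB, hvJ, hv2]
      rw [this, add_zero]
  rw [hAB]
  apply det_mul_eq_zero_of_card_lt
  rw [Fintype.card_sum, Fintype.card_coe, Fintype.card_unit]
  omega
end
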